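/- arXiv:2205.11114 — 6 statements merged into one kernel-verified Lean document; each statement's English description precedes it below -/
import Mathlib

section
/- Let ℓ be a prime number and A a commutative ring in which ℓ is invertible. Every nonzero Laurent polynomial P ∈ A[z^{±1}] has a unique expression P = r₀ + r₁(z − 1) + r₂(z^ℓ − 1) + ⋯ + r_n(z^{ℓ^{n−1}} − 1), where each r_i belongs to the A-submodule A(−⌊φ(ℓⁱ)/2⌋ ; φ(ℓⁱ) − ⌊φ(ℓⁱ)/2⌋ − 1) and r_n ≠ 0. (Here uniqueness means: the integer n ≥ 0 and the coefficients r₀, …, r_n are uniquely determined by P.) -/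
open LaurentPolynomial

/-- The `A`-submodule `A(i;j)` of the Laurent polynomial ring `A[z^{±1}]` consisting of
Laurent polynomials `∑_{i ≤ s ≤ j} a_s z^s`, realized as the span of the monomials `T s`
for `i ≤ s ≤ j`.  Here we take `i = -⌊φ(ℓ^n)/2⌋` and `j = φ(ℓ^n) - ⌊φ(ℓ^n)/2⌋ - 1`. -/
noncomputable def cyclotomicBox (A : Type*) [CommRing A] (ℓ n : ℕ) :
    Submodule A (LaurentPolynomial A) :=
  Submodule.span A ((fun s : ℤ => (T s : LaurentPolynomial A)) ''
    Set.Icc (-(((ℓ ^ n).totient / 2 : ℕ) : ℤ))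
      (((ℓ ^ n).totient : ℤ) - (((ℓ ^ n).totient / 2 : ℕ) : ℤ) - 1))

/-- The factors of the cyclotomic expansion: `1` for `i = 0` and `z^{ℓ^{i-1}} - 1` for `i ≥ 1`. -/
noncomputable def cyclotomicFactor (A : Type*) [CommRing A] (ℓ : ℕ) :
    ℕ → LaurentPolynomial A
  | 0 => 1
  | (n + 1) => T ((ℓ ^ n : ℕ) : ℤ) - 1

/-!
Put `lo n = -⌊φ(ℓ^n)/2⌋`, so that the box of level `n` is the interval `[lo n, lo n + φ(ℓ^n))`,
and call `[lo n, lo n + ℓ^n)` the window of level `n`. Since `φ(ℓ^(n+1)) + ℓ^n = ℓ^(n+1)`, the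
window of level `n + 1` is the box of level `n + 1` lengthened by `ℓ^n`, so division by
`z^(ℓ^n) - 1` with remainder supported in the window of level `n` (of length `ℓ^n`) writes every
Laurent polynomial supported in the window of level `n + 1` as `Q + R (z^(ℓ^n) - 1)`, with `Q` in
the smaller window and `R` in the box. Existence is telescoping on monomials; uniqueness holds
because reduction to `A[ℤ/m]` kills `z^m - 1`, a nonzerodivisor, and is injective on
Laurent polynomials supported in an interval of length `m`. Iterating, expansions of length at
most `n` correspond bijectively to Laurent polynomials supported in the window of level `n`.
The windows exhaust `A[z^{±1}]`, and the length of the expansion of `P ≠ 0` is the least level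
of a window containing the support of `P`.
-/

open Set AddMonoidAlgebra

theorem ZMod.intCast_injOn_Ico (a : ℤ) (m : ℕ) :
    InjOn (Int.cast : ℤ → ZMod m) (Ico a (a + m)) := by
  intro x hx y hy hxy
  have := CharP.intCast_injOn_Ico (ZMod m) m (x₁ := x - a) ⟨by linarith [hx.1], by linarith [hx.2]⟩
    (x₂ := y - a) ⟨by linarith [hy.1], by linarith [hy.2]⟩ (by push_cast; rw [hxy])
  linarith

namespace LaurentPolynomial

variable {A : Type*} [CommRing A]

theorem T_mem_supported {s : Set ℤ} {k : ℤ} (hk : k ∈ s) :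
    (T k : A[T;T⁻¹]) ∈ supported A A s := by
  rw [supported_eq_span_single]
  exact Submodule.subset_span ⟨k, hk, rfl⟩

theorem eq_zero_of_mul_T_sub_one_eq_zero {m : ℕ} (hm : m ≠ 0) {R : A[T;T⁻¹]}
    (h : R * (T m - 1) = 0) : R = 0 := by
  obtain ⟨d, p, hp⟩ := R.exists_T_pow
  have hmonic : (Polynomial.X ^ m - 1 : Polynomial A).Monic := by
    simpa using Polynomial.monic_X_pow_sub_C (1 : A) hm
  have hp0 : p * (Polynomial.X ^ m - 1) = 0 := Polynomial.toLaurent_injective <| by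
    rw [map_mul, hp, map_sub, Polynomial.toLaurent_X_pow, map_one, mul_right_comm, h, zero_mul,
      map_zero]
  rw [← zero_mul (Polynomial.X ^ m - 1)] at hp0
  rwa [hmonic.isRegular.right hp0, map_zero, eq_comm, (isUnit_T _).mul_left_eq_zero] at hp

theorem eq_zero_of_add_mul_T_sub_one_eq_zero {a : ℤ} {m : ℕ} {Q R : A[T;T⁻¹]}
    (hQ : Q ∈ supported A A (Ico a (a + m))) (h : Q + R * (T m - 1) = 0) : Q = 0 := by
  set ψ := mapDomainRingHom A (Int.castAddHom (ZMod m))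
  have hψT : ψ (T m) = 1 := by
    change mapDomain _ (single _ _) = _
    rw [mapDomain_single, one_def]
    simp
  have hψQ : ψ Q = 0 := by simpa [hψT] using congrArg ψ h
  rw [← coeff_eq_zero]
  refine Finsupp.mapDomain_injOn _ (ZMod.intCast_injOn_Ico a m) (mem_supported.1 hQ)
    (by simp) ?_
  change (ψ Q).coeff = (ψ 0).coeff
  rw [hψQ, map_zero]

theorem eq_and_eq_of_add_mul_T_sub_one_eq {a : ℤ} {m : ℕ} (hm : m ≠ 0) {Q₁ Q₂ R₁ R₂ : A[T;T⁻¹]}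
    (hQ₁ : Q₁ ∈ supported A A (Ico a (a + m))) (hQ₂ : Q₂ ∈ supported A A (Ico a (a + m)))
    (h : Q₁ + R₁ * (T m - 1) = Q₂ + R₂ * (T m - 1)) : Q₁ = Q₂ ∧ R₁ = R₂ := by
  have hsub : (Q₁ - Q₂) + (R₁ - R₂) * (T m - 1) = 0 := by linear_combination h
  have hQ : Q₁ - Q₂ = 0 := eq_zero_of_add_mul_T_sub_one_eq_zero (sub_mem hQ₁ hQ₂) hsub
  rw [hQ, zero_add] at hsub
  exact ⟨sub_eq_zero.1 hQ, sub_eq_zero.1 (eq_zero_of_mul_T_sub_one_eq_zero hm hsub)⟩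

theorem mul_T_sub_one_mem_supported {b d : ℤ} {m : ℕ} {R : A[T;T⁻¹]}
    (hR : R ∈ supported A A (Ico b (b + d))) :
    R * (T m - 1) ∈ supported A A (Ico b (b + d + m)) := by
  rw [supported_eq_span_single] at hR
  induction hR using Submodule.span_induction with
  | mem x hx =>
    obtain ⟨k, ⟨hk₁, hk₂⟩, rfl⟩ := hx
    change T k * (T m - 1) ∈ _
    rw [mul_sub, mul_one, ← T_add]
    exact sub_mem (T_mem_supported ⟨by omega, by omega⟩) (T_mem_supported ⟨hk₁, by omega⟩)
  | zero => simp
  | add x y _ _ hx hy => rw [add_mul]; exact add_mem hx hy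
  | smul c x _ hx => rw [smul_mul_assoc]; exact Submodule.smul_mem _ c hx

theorem exists_add_mul_T_sub_one_eq {a b d : ℤ} {m : ℕ} (hm : 0 < m) (hba : b ≤ a)
    (hab : a ≤ b + d) {P : A[T;T⁻¹]} (hP : P ∈ supported A A (Ico b (b + d + m))) :
    ∃ Q ∈ supported A A (Ico a (a + m)), ∃ R ∈ supported A A (Ico b (b + d)),
      P = Q + R * (T m - 1) := by
  set S := supported A A (Ico a (a + m)) ⊔
    (supported A A (Ico b (b + d))).map (LinearMap.mulRight A (T m - 1))
  suffices hS : supported A A (Ico b (b + d + m)) ≤ S by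
    obtain ⟨Q, hQ, _, ⟨R, hR, rfl⟩, hQR⟩ := Submodule.mem_sup.1 (hS hP)
    exact ⟨Q, hQ, R, hR, hQR.symm⟩
  have hT : ∀ k ∈ Ico b (b + d), T k * (T m - 1) ∈ S := fun k hk =>
    Submodule.mem_sup_right (Submodule.mem_map_of_mem (T_mem_supported hk))
  rw [supported_eq_span_single, Submodule.span_le]
  rintro _ ⟨k, hk, rfl⟩
  obtain ⟨j, hj, t, rfl⟩ : ∃ j ∈ Ico a (a + m), ∃ t : ℤ, k = j + m * t := by
    have := Int.emod_add_mul_ediv (k - a) m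
    have := Int.emod_nonneg (k - a) (by omega : (m : ℤ) ≠ 0)
    have := Int.emod_lt_of_pos (k - a) (by omega : (0 : ℤ) < m)
    exact ⟨a + (k - a) % m, ⟨by omega, by omega⟩, (k - a) / m, by omega⟩
  obtain ⟨hj₁, hj₂⟩ := hj
  change T (j + m * t) ∈ S
  induction t using Int.induction_on with
  | zero =>
    rw [mul_zero, add_zero]
    exact Submodule.mem_sup_left (T_mem_supported ⟨hj₁, hj₂⟩)
  | succ i ih =>
    have hi : 0 ≤ (m : ℤ) * i := by positivity
    rw [mul_add_one, ← add_assoc] at hk ⊢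
    obtain ⟨hk₁, hk₂⟩ := hk
    have hstep : (T (j + m * i + m) : A[T;T⁻¹]) =
        T (j + m * i) + T (j + m * i) * (T m - 1) := by
      rw [mul_sub, ← T_add]; ring
    rw [hstep]
    exact add_mem (ih ⟨by omega, by omega⟩) (hT _ ⟨by omega, by omega⟩)
  | pred i ih =>
    have hi : (m : ℤ) * -i ≤ 0 := by simp only [mul_neg, neg_nonpos]; positivity
    rw [mul_sub_one, ← add_sub_assoc] at hk ⊢
    obtain ⟨hk₁, hk₂⟩ := hk
    have hstep : (T (j + m * -i - m) : A[T;T⁻¹]) =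
        T (j + m * -i) - T (j + m * -i - m) * (T m - 1) := by
      rw [mul_sub, ← T_add]; ring_nf
    rw [hstep]
    exact sub_mem (ih ⟨by omega, by omega⟩) (hT _ ⟨by omega, by omega⟩)

end LaurentPolynomial

namespace CyclotomicExpansion

variable {A : Type*} [CommRing A] {ℓ : ℕ}

noncomputable def lowerEnd (ℓ n : ℕ) : ℤ := -(((ℓ ^ n).totient / 2 : ℕ) : ℤ)

variable (A) in
noncomputable def window (ℓ n : ℕ) : Submodule A A[T;T⁻¹] :=
  supported A A (Ico (lowerEnd ℓ n) (lowerEnd ℓ n + ((ℓ ^ n : ℕ) : ℤ)))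

variable (ℓ) in
noncomputable def expansion (r : ℕ → A[T;T⁻¹]) (n : ℕ) : A[T;T⁻¹] :=
  ∑ i ∈ Finset.range (n + 1), r i * cyclotomicFactor A ℓ i

theorem cyclotomicBox_eq_supported (n : ℕ) :
    cyclotomicBox A ℓ n =
      supported A A (Ico (lowerEnd ℓ n) (lowerEnd ℓ n + ((ℓ ^ n).totient : ℤ))) := by
  rw [cyclotomicBox, supported_eq_span_single, lowerEnd]
  congr 2
  ext k
  simp only [mem_Icc, mem_Ico]
  omega

theorem cyclotomicBox_zero : cyclotomicBox A ℓ 0 = window A ℓ 0 := by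
  simp [cyclotomicBox_eq_supported, window]

theorem expansion_zero (r : ℕ → A[T;T⁻¹]) : expansion ℓ r 0 = r 0 := by
  simp [expansion, cyclotomicFactor]

theorem expansion_succ (r : ℕ → A[T;T⁻¹]) (n : ℕ) :
    expansion ℓ r (n + 1) = expansion ℓ r n + r (n + 1) * (T ((ℓ ^ n : ℕ) : ℤ) - 1) :=
  Finset.sum_range_succ _ _

theorem expansion_congr {r s : ℕ → A[T;T⁻¹]} {n : ℕ} (h : ∀ i ≤ n, r i = s i) :
    expansion ℓ r n = expansion ℓ s n :=
  Finset.sum_congr rfl fun i hi => by rw [h i (Nat.lt_succ_iff.1 (Finset.mem_range.1 hi))]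

section

variable (hℓ : ℓ.Prime)
include hℓ

theorem totient_pow_succ_add_pow (n : ℕ) : (ℓ ^ (n + 1)).totient + ℓ ^ n = ℓ ^ (n + 1) := by
  rw [Nat.totient_prime_pow_succ hℓ, pow_succ, ← mul_add_one, Nat.sub_add_cancel hℓ.one_le]

theorem lowerEnd_succ_le (n : ℕ) : lowerEnd ℓ (n + 1) ≤ lowerEnd ℓ n := by
  have h : (ℓ ^ n).totient ≤ (ℓ ^ (n + 1)).totient :=
    Nat.le_of_dvd (Nat.totient_pos.2 (pow_pos hℓ.pos _))
      (Nat.totient_dvd_of_dvd (pow_dvd_pow ℓ n.le_succ))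
  simp only [lowerEnd, neg_le_neg_iff, Nat.cast_le]
  exact Nat.div_le_div_right h

theorem window_succ (n : ℕ) :
    window A ℓ (n + 1) = supported A A (Ico (lowerEnd ℓ (n + 1))
      (lowerEnd ℓ (n + 1) + ((ℓ ^ (n + 1)).totient : ℤ) + ((ℓ ^ n : ℕ) : ℤ))) := by
  rw [window, add_assoc, ← Nat.cast_add, totient_pow_succ_add_pow hℓ]

theorem window_mono : Monotone (window A ℓ) := by
  refine monotone_nat_of_le_succ fun n => ?_
  rw [window_succ hℓ]
  have := lowerEnd_succ_le hℓ n
  have : 0 ≤ lowerEnd ℓ (n + 1) + ((ℓ ^ (n + 1)).totient : ℤ) := by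
    simp only [lowerEnd]; omega
  have : lowerEnd ℓ n ≤ 0 := neg_nonpos.2 (Nat.cast_nonneg _)
  exact supported_mono (Ico_subset_Ico (by omega) (by omega))

theorem expansion_mem_window {r : ℕ → A[T;T⁻¹]} {n : ℕ}
    (hr : ∀ i ≤ n, r i ∈ cyclotomicBox A ℓ i) : expansion ℓ r n ∈ window A ℓ n := by
  induction n with
  | zero => simpa [expansion_zero, ← cyclotomicBox_zero] using hr 0 le_rfl
  | succ n ih =>
    rw [expansion_succ]
    refine add_mem (window_mono hℓ n.le_succ (ih fun i hi => hr i (by omega))) ?_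
    rw [window_succ hℓ]
    exact mul_T_sub_one_mem_supported (by simpa [cyclotomicBox_eq_supported] using hr _ le_rfl)

theorem exists_expansion_of_mem_window {n : ℕ} {P : A[T;T⁻¹]} (hP : P ∈ window A ℓ n) :
    ∃ r : ℕ → A[T;T⁻¹], (∀ i ≤ n, r i ∈ cyclotomicBox A ℓ i) ∧ P = expansion ℓ r n := by
  induction n generalizing P with
  | zero => exact ⟨fun _ => P, fun i hi => by simpa [Nat.le_zero.1 hi, cyclotomicBox_zero],
      (expansion_zero (ℓ := ℓ) fun _ => P).symm⟩
  | succ n ih =>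
    rw [window_succ hℓ] at hP
    obtain ⟨Q, hQ, R, hR, rfl⟩ := exists_add_mul_T_sub_one_eq (pow_pos hℓ.pos n)
      (lowerEnd_succ_le hℓ n) (by simp only [lowerEnd]; omega) hP
    obtain ⟨r, hr, rfl⟩ := ih hQ
    refine ⟨Function.update r (n + 1) R, fun i hi => ?_, ?_⟩
    · rcases hi.lt_or_eq with hi | rfl
      · rw [Function.update_of_ne hi.ne]; exact hr i (by omega)
      · rw [Function.update_self, cyclotomicBox_eq_supported]; exact hR
    · rw [expansion_succ, Function.update_self,
        expansion_congr fun i hi => Function.update_of_ne (show i ≠ n + 1 by omega) R r]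

theorem eq_of_expansion_eq {r s : ℕ → A[T;T⁻¹]} {n : ℕ}
    (hr : ∀ i ≤ n, r i ∈ cyclotomicBox A ℓ i) (hs : ∀ i ≤ n, s i ∈ cyclotomicBox A ℓ i)
    (h : expansion ℓ r n = expansion ℓ s n) : ∀ i ≤ n, r i = s i := by
  induction n with
  | zero => simpa [expansion_zero] using h
  | succ n ih =>
    rw [expansion_succ, expansion_succ] at h
    obtain ⟨hlow, htop⟩ := eq_and_eq_of_add_mul_T_sub_one_eq (pow_pos hℓ.pos n).ne'
      (expansion_mem_window hℓ fun i hi => hr i (by omega))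
      (expansion_mem_window hℓ fun i hi => hs i (by omega)) h
    intro i hi
    rcases hi.lt_or_eq with hi | rfl
    · exact ih (fun i hi => hr i (by omega)) (fun i hi => hs i (by omega)) hlow i (by omega)
    · exact htop

theorem expansion_not_mem_window {r : ℕ → A[T;T⁻¹]} {n m : ℕ}
    (hr : ∀ i ≤ n, r i ∈ cyclotomicBox A ℓ i) (hn : r n ≠ 0) (hmn : m < n) :
    expansion ℓ r n ∉ window A ℓ m := by
  obtain ⟨k, rfl⟩ : ∃ k, n = k + 1 := ⟨n - 1, by omega⟩
  intro hmem
  apply hn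
  have hP := window_mono hℓ (Nat.le_of_lt_succ hmn) hmem
  have h : expansion ℓ r k + r (k + 1) * (T ((ℓ ^ k : ℕ) : ℤ) - 1) =
      expansion ℓ r (k + 1) + 0 * (T ((ℓ ^ k : ℕ) : ℤ) - 1) := by
    rw [zero_mul, add_zero, expansion_succ]
  exact (eq_and_eq_of_add_mul_T_sub_one_eq (pow_pos hℓ.pos k).ne'
    (expansion_mem_window hℓ fun i hi => hr i (by omega)) hP h).2

theorem le_of_expansion_eq {r s : ℕ → A[T;T⁻¹]} {m n : ℕ}
    (hr : ∀ i ≤ m, r i ∈ cyclotomicBox A ℓ i) (hs : ∀ i ≤ n, s i ∈ cyclotomicBox A ℓ i)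
    (hn : s n ≠ 0) (h : expansion ℓ r m = expansion ℓ s n) : n ≤ m :=
  not_lt.1 fun hmn => expansion_not_mem_window hℓ hs hn hmn (h ▸ expansion_mem_window hℓ hr)

theorem lt_totient_prime_pow_succ (n : ℕ) : n < (ℓ ^ (n + 1)).totient := by
  rw [Nat.totient_prime_pow_succ hℓ]
  calc n < ℓ ^ n := Nat.lt_pow_self hℓ.one_lt
    _ ≤ ℓ ^ n * (ℓ - 1) := Nat.le_mul_of_pos_right _ (Nat.sub_pos_of_lt hℓ.one_lt)

theorem exists_mem_window (P : A[T;T⁻¹]) : ∃ n, P ∈ window A ℓ n := by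
  classical
  set N := P.coeff.support.sup Int.natAbs
  refine ⟨2 * N + 2 + 1, mem_supported.2 fun k hk => ?_⟩
  have hkN : k.natAbs ≤ N := Finset.le_sup (f := Int.natAbs) hk
  have hN := lt_totient_prime_pow_succ hℓ (2 * N + 2)
  have := totient_pow_succ_add_pow hℓ (2 * N + 2)
  simp only [lowerEnd, mem_Ico]
  omega

theorem exists_expansion {P : A[T;T⁻¹]} (hP : P ≠ 0) :
    ∃ n, ∃ r : ℕ → A[T;T⁻¹], (∀ i ≤ n, r i ∈ cyclotomicBox A ℓ i) ∧ r n ≠ 0 ∧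
      P = expansion ℓ r n := by
  classical
  have hex := exists_mem_window (A := A) hℓ P
  obtain ⟨r, hr, hPr⟩ := exists_expansion_of_mem_window hℓ (Nat.find_spec hex)
  refine ⟨Nat.find hex, r, hr, fun hzero => ?_, hPr⟩
  rcases hfind : Nat.find hex with _ | k <;> rw [hfind] at hPr hzero
  · exact hP (by rw [hPr, expansion_zero, hzero])
  · refine Nat.find_min hex (m := k) (by omega) ?_
    rw [hPr, expansion_succ, hzero, zero_mul, add_zero]
    exact expansion_mem_window hℓ fun i hi => hr i (by omega)

end

end CyclotomicExpansion

open CyclotomicExpansion in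
theorem cyclotomic_expansion_exists_unique_general {A : Type*} [CommRing A] {ℓ : ℕ}
    (hℓ : Nat.Prime ℓ)
    (P : LaurentPolynomial A) (hP : P ≠ 0) :
    (∃ n : ℕ, ∃ r : ℕ → LaurentPolynomial A,
      (∀ i ≤ n, r i ∈ cyclotomicBox A ℓ i) ∧ r n ≠ 0 ∧
        P = ∑ i ∈ Finset.range (n + 1), r i * cyclotomicFactor A ℓ i) ∧
    (∀ (n₁ n₂ : ℕ) (r₁ r₂ : ℕ → LaurentPolynomial A),
      ((∀ i ≤ n₁, r₁ i ∈ cyclotomicBox A ℓ i) ∧ r₁ n₁ ≠ 0 ∧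
        P = ∑ i ∈ Finset.range (n₁ + 1), r₁ i * cyclotomicFactor A ℓ i) →
      ((∀ i ≤ n₂, r₂ i ∈ cyclotomicBox A ℓ i) ∧ r₂ n₂ ≠ 0 ∧
        P = ∑ i ∈ Finset.range (n₂ + 1), r₂ i * cyclotomicFactor A ℓ i) →
      n₁ = n₂ ∧ ∀ i ≤ n₁, r₁ i = r₂ i) := by
  refine ⟨exists_expansion hℓ hP, fun n₁ n₂ r₁ r₂ ⟨hr₁, hn₁, hP₁⟩ ⟨hr₂, hn₂, hP₂⟩ => ?_⟩
  change P = expansion ℓ r₁ n₁ at hP₁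
  change P = expansion ℓ r₂ n₂ at hP₂
  obtain rfl : n₁ = n₂ := le_antisymm (le_of_expansion_eq hℓ hr₂ hr₁ hn₁ (hP₂.symm.trans hP₁))
    (le_of_expansion_eq hℓ hr₁ hr₂ hn₂ (hP₁.symm.trans hP₂))
  exact ⟨rfl, eq_of_expansion_eq hℓ hr₁ hr₂ (hP₁.symm.trans hP₂)⟩

/-- Lemma 2.2.3 (`euclidean_division`): over a commutative ring `A` in which the prime `ℓ` is
invertible, every nonzero Laurent polynomial `P` has a unique expression
`P = r₀ + r₁(z - 1) + r₂(z^ℓ - 1) + ⋯ + r_n(z^{ℓ^{n-1}} - 1)` with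
`r_i ∈ A(-⌊φ(ℓ^i)/2⌋ ; φ(ℓ^i) - ⌊φ(ℓ^i)/2⌋ - 1)` and `r_n ≠ 0`. -/
theorem cyclotomic_expansion_exists_unique {A : Type*} [CommRing A] {ℓ : ℕ}
    (hℓ : Nat.Prime ℓ) (hunit : IsUnit (ℓ : A))
    (P : LaurentPolynomial A) (hP : P ≠ 0) :
    (∃ n : ℕ, ∃ r : ℕ → LaurentPolynomial A,
      (∀ i ≤ n, r i ∈ cyclotomicBox A ℓ i) ∧ r n ≠ 0 ∧
        P = ∑ i ∈ Finset.range (n + 1), r i * cyclotomicFactor A ℓ i) ∧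
    (∀ (n₁ n₂ : ℕ) (r₁ r₂ : ℕ → LaurentPolynomial A),
      ((∀ i ≤ n₁, r₁ i ∈ cyclotomicBox A ℓ i) ∧ r₁ n₁ ≠ 0 ∧
        P = ∑ i ∈ Finset.range (n₁ + 1), r₁ i * cyclotomicFactor A ℓ i) →
      ((∀ i ≤ n₂, r₂ i ∈ cyclotomicBox A ℓ i) ∧ r₂ n₂ ≠ 0 ∧
        P = ∑ i ∈ Finset.range (n₂ + 1), r₂ i * cyclotomicFactor A ℓ i) →
      n₁ = n₂ ∧ ∀ i ≤ n₁, r₁ i = r₂ i) :=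
  cyclotomic_expansion_exists_unique_general hℓ P hP
end

section
/- Let ℓ be a prime number and A a commutative ring in which ℓ is invertible. The Laurent polynomial ring A[z^{±1}] is the internal direct sum of the A-submodules D_n, n ≥ 0, where D_0 is the submodule of constant Laurent polynomials and, for n ≥ 1, D_n = A(−⌊φ(ℓⁿ)/2⌋ ; φ(ℓⁿ) − ⌊φ(ℓⁿ)/2⌋ − 1) · (z^{ℓ^{n−1}} − 1). -/
open LaurentPolynomial

/-- The submodule `D_n` of `A[z^{±1}]`:  `D_0 = A(0;0)` is the module of constants, and for
`n ≥ 1`, `D_n = A(-⌊φ(ℓ^n)/2⌋ ; φ(ℓ^n) - ⌊φ(ℓ^n)/2⌋ - 1) · (z^{ℓ^{n-1}} - 1)`. -/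
noncomputable def cyclotomicD (A : Type*) [CommRing A] (ℓ n : ℕ) :
    Submodule A (LaurentPolynomial A) :=
  Submodule.map (LinearMap.mulRight A (cyclotomicFactor A ℓ n)) (cyclotomicBox A ℓ n)

/-!
Let `I_n = [-⌊φ(ℓⁿ)/2⌋, ℓⁿ - ⌊φ(ℓⁿ)/2⌋ - 1]`, a block of `ℓⁿ` consecutive integers, and let
`F_n` be the span of the monomials `z^k`, `k ∈ I_n`. The blocks are nested, `I_0 = {0}`, and they
exhaust `ℤ`, so it suffices that `F_n = F_{n-1} ⊕ D_n` for `n ≥ 1`. Put `d = ℓ^{n-1} = |I_{n-1}|`.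
Since `φ(ℓⁿ) = ℓⁿ - d`, `D_n` is spanned by the `z^s (z^d - 1)` with both `s` and `s + d` in `I_n`,
and subtracting these moves any `z^k`, `k ∈ I_n`, in steps of `d` into `I_{n-1}`. The sum is direct
because `A[ℤ] → A[ℤ/d]` kills `z^d - 1` but is injective on Laurent polynomials supported in `d`
consecutive degrees.
-/

theorem iSupIndep_of_disjoint_partialSups {α : Type*} [CompleteLattice α] [IsModularLattice α]
    [IsCompactlyGenerated α] {t : ℕ → α} (h : ∀ n, Disjoint (partialSups t n) (t (n + 1))) :
    iSupIndep t := by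
  classical
  suffices hrange : ∀ N, (Finset.range N).SupIndep t by
    refine iSupIndep_iff_supIndep.mpr fun s => (hrange (s.sup id + 1)).subset fun i hi => ?_
    exact Finset.mem_range.mpr (Nat.lt_succ_of_le (Finset.le_sup (f := id) hi))
  intro N
  induction N with
  | zero => exact Finset.supIndep_empty t
  | succ N ih =>
    rw [Finset.range_add_one]
    refine ih.insert ?_
    cases N with
    | zero => simp
    | succ n => simpa [← partialSups_eq_sup_range] using (h n).symm

theorem DirectSum.isInternal_of_filtration {R M : Type*} [Ring R] [AddCommGroup M] [Module R M]
    {F D : ℕ → Submodule R M} (h₀ : D 0 = F 0) (hsup : ∀ n, F n ⊔ D (n + 1) = F (n + 1))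
    (hdisj : ∀ n, Disjoint (F n) (D (n + 1))) (htop : ⨆ n, F n = ⊤) :
    DirectSum.IsInternal D := by
  have hpartial : ∀ n, partialSups D n = F n := by
    intro n
    induction n with
    | zero => simpa using h₀
    | succ n ih => rw [partialSups_add_one, ih, hsup]
  refine DirectSum.isInternal_submodule_of_iSupIndep_of_iSup_eq_top ?_ ?_
  · exact iSupIndep_of_disjoint_partialSups fun n => hpartial n ▸ hdisj n
  · rw [← iSup_partialSups_eq, funext hpartial, htop]

open Set

theorem ZMod.intCast_injOn_Icc {d : ℕ} (a : ℤ) :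
    InjOn (Int.cast : ℤ → ZMod d) (Icc a (a + d - 1)) := by
  rintro x ⟨hx₁, hx₂⟩ y ⟨hy₁, hy₂⟩ hxy
  have hdvd : (d : ℤ) ∣ y - x := (ZMod.intCast_eq_intCast_iff_dvd_sub x y d).mp hxy
  have := Int.eq_zero_of_abs_lt_dvd hdvd (abs_lt.mpr ⟨by omega, by omega⟩)
  omega

namespace LaurentPolynomial

variable (A : Type*) [CommRing A]

noncomputable def intervalSpan (a b : ℤ) : Submodule A A[T;T⁻¹] :=
  Submodule.span A ((fun k : ℤ => (T k : A[T;T⁻¹])) '' Icc a b)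

variable {A}

theorem T_mem_intervalSpan {a b k : ℤ} (hk : k ∈ Icc a b) : T k ∈ intervalSpan A a b :=
  Submodule.subset_span ⟨k, hk, rfl⟩

theorem support_coeff_subset_of_mem_span_T {S : Set ℤ} {p : A[T;T⁻¹]}
    (hp : p ∈ Submodule.span A ((fun k : ℤ => (T k : A[T;T⁻¹])) '' S)) :
    ↑p.coeff.support ⊆ S := by
  induction hp using Submodule.span_induction with
  | mem _ hx =>
    obtain ⟨k, hk, rfl⟩ := hx
    exact (Finset.coe_subset.mpr Finsupp.support_single_subset).trans (by simpa using hk)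
  | zero => simp
  | add p q _ _ hp hq =>
    exact (Finset.coe_subset.mpr Finsupp.support_add).trans (by simpa using ⟨hp, hq⟩)
  | smul r p _ hp =>
    exact (Finset.coe_subset.mpr (Finsupp.support_smul (b := r) (g := p.coeff))).trans hp

theorem mapDomain_intCast_T_sub_one (d : ℕ) :
    AddMonoidAlgebra.mapDomainRingHom A (Int.castAddHom (ZMod d)) (T d - 1) = 0 := by
  rw [map_sub, map_one, T, AddMonoidAlgebra.mapDomainRingHom_apply,
    AddMonoidAlgebra.mapDomain_single]
  simp [AddMonoidAlgebra.one_def]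

theorem disjoint_intervalSpan_range_mulRight (d : ℕ) (a : ℤ) :
    Disjoint (intervalSpan A a (a + d - 1))
      (LinearMap.range (LinearMap.mulRight A (T d - 1 : A[T;T⁻¹]))) := by
  rw [Submodule.disjoint_def]
  rintro p hp ⟨q, rfl⟩
  have hzero :
      AddMonoidAlgebra.mapDomainRingHom A (Int.castAddHom (ZMod d)) (q * (T d - 1)) = 0 := by
    rw [map_mul, mapDomain_intCast_T_sub_one, mul_zero]
  rw [← AddMonoidAlgebra.coeff_eq_zero]
  refine Finsupp.mapDomain_injOn _ (ZMod.intCast_injOn_Icc a)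
    (support_coeff_subset_of_mem_span_T hp) (by simp) ?_
  simpa using congrArg AddMonoidAlgebra.coeff hzero

theorem T_mul_T_sub_one (s : ℤ) (d : ℕ) :
    (T s * (T d - 1) : A[T;T⁻¹]) = T (s + d) - T s := by
  rw [mul_sub, mul_one, ← T_add]

theorem intervalSpan_sup_map_mulRight {a a' b' : ℤ} {d : ℕ} (hd : 0 < d) (ha : a' ≤ a)
    (hb : a + d ≤ b' + 1) :
    intervalSpan A a (a + d - 1) ⊔
      (intervalSpan A a' (b' - d)).map (LinearMap.mulRight A (T d - 1)) = intervalSpan A a' b' := by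
  apply le_antisymm
  · refine sup_le (Submodule.span_mono (image_mono (Icc_subset_Icc ha (by omega)))) ?_
    rw [Submodule.map_le_iff_le_comap, intervalSpan, Submodule.span_le]
    rintro _ ⟨s, ⟨hs₁, hs₂⟩, rfl⟩
    rw [SetLike.mem_coe, Submodule.mem_comap, LinearMap.mulRight_apply, T_mul_T_sub_one]
    exact sub_mem (T_mem_intervalSpan ⟨by omega, by omega⟩)
      (T_mem_intervalSpan ⟨by omega, by omega⟩)
  · set M := intervalSpan A a (a + d - 1) ⊔
      (intervalSpan A a' (b' - d)).map (LinearMap.mulRight A (T d - 1))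
    have hstep : ∀ s ∈ Icc a' (b' - d), T (s + d) - T s ∈ M := fun s hs => by
      rw [← T_mul_T_sub_one]
      exact Submodule.mem_sup_right (Submodule.mem_map_of_mem (T_mem_intervalSpan hs))
    rw [intervalSpan, Submodule.span_le]
    rintro _ ⟨k, ⟨hk₁, hk₂⟩, rfl⟩
    induction hdist : (a - k).toNat + (k - (a + d - 1)).toNat using Nat.strong_induction_on
      generalizing k with
    | _ n ih =>
      by_cases hkI : a ≤ k ∧ k ≤ a + d - 1
      · exact Submodule.mem_sup_left (T_mem_intervalSpan hkI)
      rcases lt_or_ge k a with hka | hka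
      · have hup := ih _ (by omega) (k + d) (by omega) (by omega) rfl
        have := sub_mem hup (hstep k ⟨hk₁, by omega⟩)
        rwa [sub_sub_cancel] at this
      · have hdown := ih _ (by omega) (k - d) (by omega) (by omega) rfl
        have := add_mem (hstep (k - d) ⟨by omega, by omega⟩) hdown
        rwa [sub_add_cancel, sub_add_cancel] at this

theorem iSup_intervalSpan_eq_top {ι : Type*} {a b : ι → ℤ} (h : ∀ k, ∃ i, k ∈ Icc (a i) (b i)) :
    ⨆ i, intervalSpan A (a i) (b i) = ⊤ := by
  rw [eq_top_iff]
  rintro p -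
  induction p using LaurentPolynomial.induction_on' with
  | add p q hp hq => exact add_mem hp hq
  | C_mul_T k c =>
    obtain ⟨i, hi⟩ := h k
    rw [← smul_eq_C_mul]
    exact Submodule.smul_mem _ c (Submodule.mem_iSup_of_mem i (T_mem_intervalSpan hi))

theorem isInternal_of_nested_intervals {D : ℕ → Submodule A A[T;T⁻¹]} {a : ℕ → ℤ} {L : ℕ → ℕ}
    (hL : ∀ n, 0 < L n) (ha : ∀ n, a (n + 1) ≤ a n)
    (hb : ∀ n, a n + L n ≤ a (n + 1) + L (n + 1))
    (hcover : ∀ k, ∃ n, k ∈ Icc (a n) (a n + L n - 1))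
    (hD₀ : D 0 = intervalSpan A (a 0) (a 0 + L 0 - 1))
    (hD : ∀ n, D (n + 1) = (intervalSpan A (a (n + 1)) (a (n + 1) + L (n + 1) - 1 - L n)).map
      (LinearMap.mulRight A (T (L n) - 1))) :
    DirectSum.IsInternal D :=
  DirectSum.isInternal_of_filtration (F := fun n => intervalSpan A (a n) (a n + L n - 1)) hD₀
    (fun n => hD n ▸ intervalSpan_sup_map_mulRight (hL n) (ha n) (by linarith [hb n]))
    (fun n => hD n ▸ (disjoint_intervalSpan_range_mulRight _ _).mono_right LinearMap.map_le_range)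
    (iSup_intervalSpan_eq_top hcover)

end LaurentPolynomial

theorem Nat.totient_prime_pow_succ_add {ℓ : ℕ} (hℓ : ℓ.Prime) (n : ℕ) :
    (ℓ ^ (n + 1)).totient + ℓ ^ n = ℓ ^ (n + 1) := by
  rw [Nat.totient_prime_pow_succ hℓ, pow_succ, ← Nat.mul_add_one, Nat.sub_add_cancel hℓ.one_le]

theorem Nat.pow_le_totient_prime_pow_succ {ℓ : ℕ} (hℓ : ℓ.Prime) (n : ℕ) :
    ℓ ^ n ≤ (ℓ ^ (n + 1)).totient := by
  rw [Nat.totient_prime_pow_succ hℓ]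
  exact Nat.le_mul_of_pos_right _ (Nat.sub_pos_of_lt hℓ.one_lt)

theorem cyclotomicBox_eq_intervalSpan (A : Type*) [CommRing A] (ℓ n : ℕ) :
    cyclotomicBox A ℓ n = intervalSpan A (-(((ℓ ^ n).totient / 2 : ℕ) : ℤ))
      (((ℓ ^ n).totient : ℤ) - (((ℓ ^ n).totient / 2 : ℕ) : ℤ) - 1) :=
  rfl

theorem laurent_isInternal_cyclotomicD_general {A : Type*} [CommRing A] {ℓ : ℕ}
    (hℓ : Nat.Prime ℓ) :
    DirectSum.IsInternal (fun n : ℕ => cyclotomicD A ℓ n) := by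
  have htot := Nat.totient_prime_pow_succ_add hℓ
  have hpow := Nat.pow_le_totient_prime_pow_succ hℓ
  refine isInternal_of_nested_intervals (a := fun n => -(((ℓ ^ n).totient / 2 : ℕ) : ℤ))
    (L := fun n => ℓ ^ n) (fun n => pow_pos hℓ.pos n) (fun n => ?_) (fun n => ?_) (fun k => ?_) ?_
    (fun n => ?_)
  · have := Nat.totient_le (ℓ ^ n)
    have := hpow n
    omega
  · have := htot n
    omega
  · -- `φ(ℓ^(m+1)) ≥ ℓ^m > m`, so `m = 2|k|` puts `k` in `I_(m+1)`
    have := htot (2 * k.natAbs)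
    have := hpow (2 * k.natAbs)
    have := Nat.lt_pow_self hℓ.one_lt (n := 2 * k.natAbs)
    exact ⟨2 * k.natAbs + 1, by omega, by omega⟩
  · simp [cyclotomicD, cyclotomicFactor, cyclotomicBox_eq_intervalSpan]
  · rw [cyclotomicD, cyclotomicFactor, cyclotomicBox_eq_intervalSpan]
    congr 2
    have := htot n
    omega

/-- The decomposition `A[z^{±1}] = ⊕_{n ≥ 0} D_n` as an internal direct sum of `A`-modules,
where `ℓ` is a prime invertible in the commutative ring `A`. -/
theorem laurent_isInternal_cyclotomicD {A : Type*} [CommRing A] {ℓ : ℕ}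
    (hℓ : Nat.Prime ℓ) (hunit : IsUnit (ℓ : A)) :
    DirectSum.IsInternal (fun n : ℕ => cyclotomicD A ℓ n) :=
  laurent_isInternal_cyclotomicD_general hℓ
end

section
/- Let ℓ be a prime number and A a commutative ring in which ℓ is invertible. For every n ≥ 0, the composite of the inclusion D_n ↪ A[z^{±1}] with the quotient map A[z^{±1}] → A[z^{±1}]/(Φ_{ℓⁿ}) (quotient by the ideal generated by the ℓⁿ-th cyclotomic polynomial) is an isomorphism of A-modules. -/
open LaurentPolynomial

/-- The `ℓⁿ`-th cyclotomic polynomial `Φ_{ℓⁿ}`, viewed as an element of `A[z^{±1}]`. -/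
noncomputable def cyclotomicLaurent (A : Type*) [CommRing A] (ℓ n : ℕ) :
    LaurentPolynomial A :=
  Polynomial.toLaurent (Polynomial.cyclotomic (ℓ ^ n) A)

/-!
Because `Φ_{ℓⁿ}` is monic with unit constant term, `z` is already invertible in `A[z]/(Φ_{ℓⁿ})`,
so `A[z^{±1}]/(Φ_{ℓⁿ}) ≅ A[z]/(Φ_{ℓⁿ})` is free with basis `1, z, …, z^{φ(ℓⁿ)-1}`.
For `n ≥ 1`, `x = z^{ℓ^{n-1}}` satisfies `∑_{i<ℓ} xⁱ = Φ_{ℓⁿ} = 0` in the quotient, so `x - 1`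
divides `∑_{i<ℓ} (xⁱ - 1) = -ℓ` and is a unit. Thus `D_n` is the image of `A(0; φ(ℓⁿ)-1)` under
multiplication by the unit `z^{-⌊φ(ℓⁿ)/2⌋}(z^{ℓ^{n-1}} - 1)`, which carries that basis to a basis.
-/
open Polynomial

theorem Polynomial.isUnit_cyclotomic_coeff_zero (R : Type*) [CommRing R] (m : ℕ) :
    IsUnit ((cyclotomic m R).coeff 0) := by
  rcases m with _ | _ | m
  · simp
  · simp
  · rw [cyclotomic_coeff_zero R (by omega)]
    exact isUnit_one

theorem AdjoinRoot.isUnit_root_of_isUnit_coeff_zero {R : Type*} [CommRing R] {p : R[X]}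
    (h : IsUnit (p.coeff 0)) : IsUnit (root p) := by
  refine isUnit_of_dvd_unit ⟨-mk p p.divX, ?_⟩ (h.map (of p))
  have hp := congrArg (mk p) (X_mul_divX_add p)
  rw [mk_self, map_add, map_mul, mk_X, mk_C] at hp
  linear_combination hp

namespace LaurentPolynomial

variable {R : Type*} [CommRing R] {p : R[X]} (h : IsUnit (p.coeff 0))

noncomputable def toAdjoinRoot : R[T;T⁻¹] →ₐ[R] AdjoinRoot p :=
  { eval₂ (algebraMap R (AdjoinRoot p)) (AdjoinRoot.isUnit_root_of_isUnit_coeff_zero h).unit with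
    commutes' := fun r => by simp [← C_eq_algebraMap] }

theorem toAdjoinRoot_toLaurent (q : R[X]) :
    toAdjoinRoot h (toLaurent q) = AdjoinRoot.mk p q := by
  rw [← AdjoinRoot.aeval_eq, aeval_def]
  exact eval₂_toLaurent _ _ q

theorem toAdjoinRoot_T (i : ℕ) :
    toAdjoinRoot h (T i) = AdjoinRoot.root p ^ i := by
  rw [← toLaurent_X_pow, toAdjoinRoot_toLaurent, map_pow, AdjoinRoot.mk_X]

theorem toAdjoinRoot_surjective : Function.Surjective (toAdjoinRoot h) := by
  intro a
  obtain ⟨q, rfl⟩ := AdjoinRoot.mk_surjective a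
  exact ⟨toLaurent q, toAdjoinRoot_toLaurent h q⟩

theorem ker_toAdjoinRoot : RingHom.ker (toAdjoinRoot h) = Ideal.span {toLaurent p} := by
  ext f
  rw [RingHom.mem_ker, Ideal.mem_span_singleton]
  constructor
  · intro hf
    obtain ⟨n, f', hf'⟩ := exists_T_pow f
    obtain ⟨q, rfl⟩ : p ∣ f' := by
      rw [← AdjoinRoot.mk_eq_zero, ← toAdjoinRoot_toLaurent h, hf', map_mul, hf, zero_mul]
    refine ⟨toLaurent q * T (-n), ?_⟩
    rw [← mul_assoc, ← map_mul, hf', mul_assoc, ← T_add, add_neg_cancel, T_zero, mul_one]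
  · rintro ⟨q, rfl⟩
    rw [map_mul, toAdjoinRoot_toLaurent, AdjoinRoot.mk_self, zero_mul]

noncomputable def quotientEquivAdjoinRoot :
    (R[T;T⁻¹] ⧸ Ideal.span {toLaurent p}) ≃ₐ[R] AdjoinRoot p :=
  (Ideal.quotientEquivAlgOfEq R (ker_toAdjoinRoot h).symm).trans
    (Ideal.quotientKerAlgEquivOfSurjective (toAdjoinRoot_surjective h))

theorem quotientEquivAdjoinRoot_mk (f : R[T;T⁻¹]) :
    quotientEquivAdjoinRoot h (Ideal.Quotient.mk _ f) = toAdjoinRoot h f := by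
  simp [quotientEquivAdjoinRoot]

noncomputable def quotientBasis (hm : p.Monic) :
    Module.Basis (Fin p.natDegree) R (R[T;T⁻¹] ⧸ Ideal.span {toLaurent p}) :=
  (AdjoinRoot.powerBasis' hm).basis.map (quotientEquivAdjoinRoot h).symm.toLinearEquiv

theorem quotientBasis_apply (hm : p.Monic) (i : Fin p.natDegree) :
    quotientBasis h hm i = Ideal.Quotient.mk _ (T (i : ℕ)) := by
  change (quotientEquivAdjoinRoot h).symm ((AdjoinRoot.powerBasis' hm).basis i) = _
  rw [(AdjoinRoot.powerBasis' hm).basis_eq_pow i, AlgEquiv.symm_apply_eq,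
    quotientEquivAdjoinRoot_mk, toAdjoinRoot_T]
  rfl

end LaurentPolynomial

theorem isUnit_sub_one_of_geom_sum_eq_zero {R : Type*} [CommRing R] {x : R} {m : ℕ}
    (hm : IsUnit (m : R)) (h : ∑ i ∈ Finset.range m, x ^ i = 0) : IsUnit (x - 1) := by
  refine isUnit_of_dvd_unit ?_ hm.neg
  have hdvd : x - 1 ∣ ∑ i ∈ Finset.range m, (x ^ i - 1) :=
    Finset.dvd_sum fun i _ => sub_one_dvd_pow_sub_one x i
  simpa [Finset.sum_sub_distrib, h] using hdvd

theorem Module.Basis.bijective_comp_subtype_span {ι R M N : Type*} [Ring R] [AddCommGroup M]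
    [Module R M] [AddCommGroup N] [Module R N] {v : ι → M} (g : M →ₗ[R] N) (b : Basis ι R N)
    (hv : ∀ i, g (v i) = b i) :
    Function.Bijective (g ∘ₗ (Submodule.span R (Set.range v)).subtype) := by
  have hli : LinearIndependent R v :=
    LinearIndependent.of_comp g (by simpa only [Function.comp_def, hv] using b.linearIndependent)
  have heq : g ∘ₗ (Submodule.span R (Set.range v)).subtype =
      ((Basis.span hli).equiv b (Equiv.refl ι)).toLinearMap :=
    (Basis.span hli).ext fun i => by
      rw [LinearEquiv.coe_coe, Basis.equiv_apply, Basis.span_apply]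
      exact hv i
  rw [heq]
  exact LinearEquiv.bijective _

section

variable {A : Type*} [CommRing A] {ℓ : ℕ}

theorem isUnit_mk_cyclotomicFactor (hℓ : ℓ.Prime) (hunit : IsUnit (ℓ : A)) (n : ℕ) :
    IsUnit (Ideal.Quotient.mk (Ideal.span {cyclotomicLaurent A ℓ n}) (cyclotomicFactor A ℓ n)) := by
  rcases n with _ | m
  · simp [cyclotomicFactor]
  set π := Ideal.Quotient.mk (Ideal.span {cyclotomicLaurent A ℓ (m + 1)})
  have hΦ : cyclotomicLaurent A ℓ (m + 1) = ∑ i ∈ Finset.range ℓ, T ((ℓ ^ m : ℕ) : ℤ) ^ i := by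
    simp only [cyclotomicLaurent, cyclotomic_prime_pow_eq_geom_sum hℓ, map_sum, map_pow,
      toLaurent_X, T_pow, mul_one]
  have hgeom : ∑ i ∈ Finset.range ℓ, π (T ((ℓ ^ m : ℕ) : ℤ)) ^ i = 0 := by
    have h0 : π (cyclotomicLaurent A ℓ (m + 1)) = 0 :=
      Ideal.Quotient.eq_zero_iff_mem.mpr (Ideal.mem_span_singleton_self _)
    have h := congrArg π hΦ
    rw [h0, map_sum] at h
    simpa only [map_pow] using h.symm
  have hℓ' : IsUnit (ℓ : LaurentPolynomial A ⧸ Ideal.span {cyclotomicLaurent A ℓ (m + 1)}) := by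
    simpa using hunit.map (algebraMap A _)
  simpa [cyclotomicFactor, π] using isUnit_sub_one_of_geom_sum_eq_zero hℓ' hgeom

variable (A ℓ) in
noncomputable def cyclotomicQuotientBasis [Nontrivial A] (n : ℕ) :
    Module.Basis (Fin (ℓ ^ n).totient) A
      (LaurentPolynomial A ⧸ Ideal.span {cyclotomicLaurent A ℓ n}) :=
  (quotientBasis (isUnit_cyclotomic_coeff_zero A _) (cyclotomic.monic (ℓ ^ n) A)).reindex
    (finCongr (natDegree_cyclotomic _ A))

theorem cyclotomicQuotientBasis_apply [Nontrivial A] (n : ℕ) (i : Fin (ℓ ^ n).totient) :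
    cyclotomicQuotientBasis A ℓ n i = Ideal.Quotient.mk _ (T (i : ℕ)) := by
  unfold cyclotomicQuotientBasis cyclotomicLaurent
  rw [Module.Basis.reindex_apply]
  exact quotientBasis_apply _ _ _

theorem cyclotomicBox_eq_span (n : ℕ) :
    cyclotomicBox A ℓ n = Submodule.span A (Set.range fun i : Fin (ℓ ^ n).totient =>
      T (-(((ℓ ^ n).totient / 2 : ℕ) : ℤ) + (i : ℕ))) := by
  rw [cyclotomicBox]
  congr 1
  ext y
  simp only [Set.mem_image, Set.mem_Icc, Set.mem_range]
  constructor
  · rintro ⟨s, ⟨h1, h2⟩, rfl⟩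
    exact ⟨⟨(s + (((ℓ ^ n).totient / 2 : ℕ) : ℤ)).toNat, by omega⟩, by congr 1; push_cast; omega⟩
  · rintro ⟨i, rfl⟩
    exact ⟨_, by omega, rfl⟩

theorem cyclotomicD_eq_span (n : ℕ) :
    cyclotomicD A ℓ n = Submodule.span A (Set.range fun i : Fin (ℓ ^ n).totient =>
      T (-(((ℓ ^ n).totient / 2 : ℕ) : ℤ) + (i : ℕ)) * cyclotomicFactor A ℓ n) := by
  rw [cyclotomicD, cyclotomicBox_eq_span, Submodule.map_span, ← Set.range_comp]
  rfl

end

/-- For a prime `ℓ` invertible in the commutative ring `A` and every `n ≥ 0`, the composite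
`D_n ↪ A[z^{±1}] → A[z^{±1}]/(Φ_{ℓⁿ})` of the inclusion with the quotient map modulo the
ideal generated by the `ℓⁿ`-th cyclotomic polynomial is an isomorphism of `A`-modules. -/
theorem cyclotomicD_to_quotient_bijective {A : Type*} [CommRing A] {ℓ : ℕ}
    (hℓ : Nat.Prime ℓ) (hunit : IsUnit (ℓ : A)) (n : ℕ) :
    Function.Bijective
      ((Ideal.Quotient.mkₐ A (Ideal.span {cyclotomicLaurent A ℓ n})).toLinearMap ∘ₗ
        (cyclotomicD A ℓ n).subtype) := by
  -- over the zero ring `Φ_{ℓⁿ}` has degree `0`, not `φ(ℓⁿ)`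
  rcases subsingleton_or_nontrivial A with hA | hA
  · have := Module.subsingleton A (LaurentPolynomial A)
    exact ⟨fun _ _ _ => Subsingleton.elim _ _, fun _ => ⟨0, Subsingleton.elim _ _⟩⟩
  set k : ℤ := (((ℓ ^ n).totient / 2 : ℕ) : ℤ)
  set I := Ideal.span {cyclotomicLaurent A ℓ n}
  obtain ⟨u, hu⟩ : IsUnit (Ideal.Quotient.mk I (T (-k) * cyclotomicFactor A ℓ n)) := by
    rw [map_mul]
    exact ((isUnit_T (-k)).map _).mul (isUnit_mk_cyclotomicFactor hℓ hunit n)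
  rw [cyclotomicD_eq_span]
  refine Module.Basis.bijective_comp_subtype_span _
    ((cyclotomicQuotientBasis A ℓ n).map (u.mulRightLinearEquiv A)) fun i => ?_
  change Ideal.Quotient.mk I (T (-k + (i : ℕ)) * cyclotomicFactor A ℓ n) =
    cyclotomicQuotientBasis A ℓ n i * u
  rw [cyclotomicQuotientBasis_apply, hu, ← map_mul, T_add, mul_comm (T (-k)), mul_assoc]
end

section
/- Let ℓ be a prime number and A a commutative ring in which ℓ is invertible. The A-algebra homomorphism c : A[z^{±1}] → ∏_{n ≥ 0} A[z^{±1}]/(Φ_{ℓⁿ}), whose n-th component is the quotient map modulo the ideal generated by the ℓⁿ-th cyclotomic polynomial Φ_{ℓⁿ}, is injective. -/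
open LaurentPolynomial

/-- The `A`-algebra homomorphism `c : A[z^{±1}] → ∏_{n ≥ 0} A[z^{±1}]/(Φ_{ℓⁿ})` whose `n`-th
component is reduction modulo the ideal generated by `Φ_{ℓⁿ}`. -/
noncomputable def cyclotomicRestriction (A : Type*) [CommRing A] (ℓ : ℕ) :
    LaurentPolynomial A →+* ∀ n : ℕ, LaurentPolynomial A ⧸ Ideal.span {cyclotomicLaurent A ℓ n} :=
  Pi.ringHom fun n => Ideal.Quotient.mk (Ideal.span {cyclotomicLaurent A ℓ n})

/-! Every `Φ_{ℓⁿ}` is monic and coprime to `z`, so a Laurent polynomial killed by `c` is, up to a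
power of `z`, a polynomial divisible by every `Φ_{ℓⁿ}`. These have unbounded degree
`φ(ℓⁿ) = ℓⁿ⁻¹(ℓ - 1)`, which forces that polynomial to vanish. -/

theorem Nat.lt_totient_prime_pow_succ {p : ℕ} (hp : p.Prime) (n : ℕ) :
    n < (p ^ (n + 1)).totient := by
  rw [Nat.totient_prime_pow_succ hp]
  calc n < p ^ n := Nat.lt_pow_self hp.one_lt
    _ ≤ p ^ n * (p - 1) := Nat.le_mul_of_pos_right _ (Nat.sub_pos_of_lt hp.one_lt)

namespace Polynomial

variable {R : Type*} [CommRing R]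

theorem isCoprime_X_of_isUnit_coeff_zero {p : R[X]} (h : IsUnit (p.coeff 0)) :
    IsCoprime p X := by
  have hC : IsCoprime (C (p.coeff 0)) X :=
    (isCoprime_mul_unit_left_left (h.map C) 1 X).mpr isCoprime_one_left |>.of_mul_left_left
  simpa only [add_comm, X_mul_divX_add] using hC.add_mul_left_left p.divX

theorem isUnit_cyclotomic_coeff_zero_s3 (n : ℕ) : IsUnit ((cyclotomic n R).coeff 0) := by
  rcases lt_or_ge 1 n with hn | hn
  · simp [cyclotomic_coeff_zero R hn]
  · interval_cases n <;> simp [cyclotomic_one]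

theorem Monic.natDegree_le_of_dvd {p q : R[X]} (hp : p.Monic) (hpq : p ∣ q) (hq : q ≠ 0) :
    p.natDegree ≤ q.natDegree := by
  obtain ⟨r, rfl⟩ := hpq
  rw [hp.natDegree_mul' (right_ne_zero_of_mul hq)]
  exact Nat.le_add_right _ _

theorem eq_zero_of_forall_monic_dvd {ι : Type*} {q : ι → R[X]} (hmonic : ∀ i, (q i).Monic)
    (hdeg : ∀ d, ∃ i, d < (q i).natDegree) {p : R[X]} (hdvd : ∀ i, q i ∣ p) : p = 0 := by
  by_contra hp
  obtain ⟨i, hi⟩ := hdeg p.natDegree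
  exact hi.not_ge ((hmonic i).natDegree_le_of_dvd (hdvd i) hp)

/-- Clearing the denominator of the Laurent quotient multiplies `p` by a power of `X`, which
coprimality then removes. -/
theorem dvd_of_toLaurent_dvd {p q : R[X]} (hq : IsCoprime q X)
    (h : toLaurent q ∣ toLaurent p) : q ∣ p := by
  obtain ⟨g, hg⟩ := h
  obtain ⟨m, r, hr⟩ := g.exists_T_pow
  have hdvd : q ∣ X ^ m * p := ⟨r, toLaurent_injective <| by
    rw [map_mul, map_mul, toLaurent_X_pow, hr, hg]
    ring⟩
  exact hq.pow_right.dvd_of_dvd_mul_left hdvd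

end Polynomial

namespace LaurentPolynomial

open Polynomial

theorem eq_zero_of_forall_toLaurent_dvd {R ι : Type*} [CommRing R] {q : ι → R[X]}
    (hmonic : ∀ i, (q i).Monic) (hX : ∀ i, IsCoprime (q i) X)
    (hdeg : ∀ d, ∃ i, d < (q i).natDegree) {f : R[T;T⁻¹]} (hdvd : ∀ i, toLaurent (q i) ∣ f) :
    f = 0 := by
  obtain ⟨m, p, hp⟩ := f.exists_T_pow
  have hp0 : p = 0 := eq_zero_of_forall_monic_dvd hmonic hdeg fun i =>
    dvd_of_toLaurent_dvd (hX i) (hp ▸ (hdvd i).mul_right _)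
  rw [hp0, map_zero, eq_comm, (isUnit_T _).mul_left_eq_zero] at hp
  exact hp

end LaurentPolynomial

open Polynomial in
theorem cyclotomicRestriction_injective_general {A : Type*} [CommRing A] {ℓ : ℕ}
    (hℓ : Nat.Prime ℓ) :
    Function.Injective (cyclotomicRestriction A ℓ) := by
  rw [injective_iff_map_eq_zero]
  intro f hf
  nontriviality A
  refine eq_zero_of_forall_toLaurent_dvd (q := fun n => cyclotomic (ℓ ^ n) A)
    (fun n => cyclotomic.monic _ A)
    (fun n => isCoprime_X_of_isUnit_coeff_zero (isUnit_cyclotomic_coeff_zero_s3 _))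
    (fun d => ⟨d + 1, by simpa only [natDegree_cyclotomic] using Nat.lt_totient_prime_pow_succ hℓ d⟩)
    (fun n => Ideal.mem_span_singleton.mp (Ideal.Quotient.eq_zero_iff_mem.mp (congrFun hf n)))

/-- For a prime `ℓ` invertible in the commutative ring `A`, the homomorphism
`c : A[z^{±1}] → ∏_{n ≥ 0} A[z^{±1}]/(Φ_{ℓⁿ})` is injective. -/
theorem cyclotomicRestriction_injective {A : Type*} [CommRing A] {ℓ : ℕ}
    (hℓ : Nat.Prime ℓ) (hunit : IsUnit (ℓ : A)) :
    Function.Injective (cyclotomicRestriction A ℓ) :=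
  cyclotomicRestriction_injective_general hℓ
end

section
/- Let ℓ be a prime number and A a commutative ring in which ℓ is invertible. A family (q_n)_{n ≥ 0} ∈ ∏_{n ≥ 0} A[z^{±1}]/(Φ_{ℓⁿ}) lies in the image of the homomorphism c if and only if there exist an integer N ≥ 0 and elements P_i ∈ D_i for 0 ≤ i ≤ N such that for every n ≥ 0 one has q_n = class of (P_0 + P_1 + ⋯ + P_N) modulo Φ_{ℓⁿ}; in that case (q_n)_{n≥0} = c(P_0 + ⋯ + P_N). Equivalently, defining P_i ∈ D_i inductively as the unique element of D_i whose class modulo Φ_{ℓⁱ} equals that of q_i − (P_0 + ⋯ + P_{i−1}), the family (q_n) lies in the image of c if and only if there exists N such that q_n equals the class of P_0 + ⋯ + P_N modulo Φ_{ℓⁿ} for all n ≥ N. -/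
open LaurentPolynomial

/-! The `D_i` together span `A[z^{±1}]`, so every Laurent polynomial is some `P_0 + ⋯ + P_N`.
By induction on `n`, `D_0 + ⋯ + D_n` contains `z^t` for the `ℓⁿ` consecutive exponents
`-⌊φ(ℓⁿ)/2⌋ ≤ t < ℓⁿ - ⌊φ(ℓⁿ)/2⌋`: the window for `n + 1` is swept out from the one for `n` by the
differences `z^(s + ℓⁿ) - z^s ∈ D_{n+1}`, and these windows exhaust `ℤ`. -/

theorem Int.forall_mem_Ico_of_shift_of_window {P : ℤ → Prop} {a b c p : ℤ} (hp : 0 < p)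
    (hab : a ≤ b) (hbc : b ≤ c) (hshift : ∀ s ∈ Set.Ico a c, P s ↔ P (s + p))
    (hwindow : ∀ t ∈ Set.Ico b (b + p), P t) : ∀ t ∈ Set.Ico a (c + p), P t := by
  have reach : ∀ k : ℕ, ∀ t ∈ Set.Ico a (c + p), b - k * p ≤ t → t < b + p + k * p → P t := by
    intro k
    induction k with
    | zero => intro t _ h₁ h₂; exact hwindow t ⟨by simpa using h₁, by simpa using h₂⟩
    | succ k ih =>
      rintro t ⟨hat, htc⟩ h₁ h₂
      push_cast at h₁ h₂
      by_cases hlow : t < b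
      · exact (hshift t ⟨hat, by omega⟩).2
          (ih (t + p) ⟨by omega, by omega⟩ (by nlinarith) (by nlinarith))
      by_cases hhigh : b + p ≤ t
      · have := ih (t - p) ⟨by omega, by omega⟩ (by nlinarith) (by nlinarith)
        simpa using (hshift (t - p) ⟨by omega, by omega⟩).1 this
      · exact hwindow t ⟨by omega, by omega⟩
  rintro t ht
  refine reach (t - b).natAbs t ht ?_ ?_ <;> push_cast <;> cases abs_cases (t - b) <;> nlinarith

theorem Submodule.exists_sum_range_of_mem_iSup {R M : Type*} [Semiring R] [AddCommMonoid M]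
    [Module R M] {p : ℕ → Submodule R M} {x : M} (hx : x ∈ ⨆ i, p i) :
    ∃ (N : ℕ) (f : ℕ → M), (∀ i ≤ N, f i ∈ p i) ∧ ∑ i ∈ Finset.range (N + 1), f i = x := by
  obtain ⟨f, hf, rfl⟩ := (Submodule.mem_iSup_iff_exists_finsupp p x).1 hx
  refine ⟨f.support.sup id, f, fun i _ => hf i, (Finset.sum_subset (fun i hi => ?_)
    (fun i _ hi => Finsupp.notMem_support_iff.1 hi)).symm⟩
  exact Finset.mem_range_succ_iff.2 (Finset.le_sup (f := id) hi)

namespace Cyclotomic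

variable {A : Type*} [CommRing A] {ℓ : ℕ}

def boxStart (ℓ n : ℕ) : ℤ := -(((ℓ ^ n).totient / 2 : ℕ) : ℤ)

lemma T_mem_cyclotomicBox {n : ℕ} {s : ℤ}
    (hs : s ∈ Set.Ico (boxStart ℓ n) (boxStart ℓ n + (ℓ ^ n).totient)) :
    (T s : LaurentPolynomial A) ∈ cyclotomicBox A ℓ n :=
  Submodule.subset_span ⟨s, ⟨hs.1, by obtain ⟨-, h⟩ := hs; unfold boxStart at h; omega⟩, rfl⟩

lemma one_mem_cyclotomicD_zero : (1 : LaurentPolynomial A) ∈ cyclotomicD A ℓ 0 :=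
  ⟨T 0, T_mem_cyclotomicBox (by norm_num [boxStart]), by
    rw [LinearMap.mulRight_apply, cyclotomicFactor, mul_one, T_zero]⟩

lemma T_add_sub_T_mem_cyclotomicD {n : ℕ} {s : ℤ}
    (hs : s ∈ Set.Ico (boxStart ℓ (n + 1)) (boxStart ℓ (n + 1) + (ℓ ^ (n + 1)).totient)) :
    (T (s + ((ℓ ^ n : ℕ) : ℤ)) - T s : LaurentPolynomial A) ∈ cyclotomicD A ℓ (n + 1) :=
  ⟨T s, T_mem_cyclotomicBox hs, by
    rw [LinearMap.mulRight_apply, cyclotomicFactor, mul_sub, mul_one, ← T_add]⟩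

lemma boxStart_succ_le (hℓ : ℓ ≠ 0) (n : ℕ) : boxStart ℓ (n + 1) ≤ boxStart ℓ n := by
  have : (ℓ ^ n).totient ≤ (ℓ ^ (n + 1)).totient :=
    Nat.le_of_dvd (by simp [Nat.pos_of_ne_zero hℓ])
      (Nat.totient_dvd_of_dvd (pow_dvd_pow ℓ n.le_succ))
  have := Nat.div_le_div_right (c := 2) this
  unfold boxStart
  omega

lemma totient_prime_pow_succ_add (hℓ : ℓ.Prime) (n : ℕ) :
    (ℓ ^ (n + 1)).totient + ℓ ^ n = ℓ ^ (n + 1) := by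
  rw [Nat.totient_prime_pow_succ hℓ, ← mul_add_one, Nat.sub_add_cancel hℓ.one_le, pow_succ]

lemma T_mem_iSup_cyclotomicD_of_mem_Ico (hℓ : ℓ.Prime) (n : ℕ) {t : ℤ}
    (ht : t ∈ Set.Ico (boxStart ℓ n) (boxStart ℓ n + ((ℓ ^ n : ℕ) : ℤ))) :
    (T t : LaurentPolynomial A) ∈ ⨆ i, cyclotomicD A ℓ i := by
  set M := ⨆ i, cyclotomicD A ℓ i
  induction n generalizing t with
  | zero =>
    obtain rfl : t = 0 := by simp [boxStart] at ht; omega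
    exact Submodule.mem_iSup_of_mem 0 one_mem_cyclotomicD_zero
  | succ n ih =>
    have hsum : ((ℓ ^ (n + 1)).totient : ℤ) + ((ℓ ^ n : ℕ) : ℤ) = ((ℓ ^ (n + 1) : ℕ) : ℤ) := by
      exact_mod_cast totient_prime_pow_succ_add hℓ n
    have hstart : boxStart ℓ n ≤ boxStart ℓ (n + 1) + (ℓ ^ (n + 1)).totient := by
      unfold boxStart; omega
    refine Int.forall_mem_Ico_of_shift_of_window (P := fun t => (T t : LaurentPolynomial A) ∈ M)
      (by exact_mod_cast pow_pos hℓ.pos n) (boxStart_succ_le hℓ.ne_zero n) hstart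
      (fun s hs => ?_) (fun t ht => ih ht) t (by rwa [add_assoc, hsum])
    rw [← sub_add_cancel (T (s + _) : LaurentPolynomial A) (T s)]
    exact (Submodule.add_mem_iff_right M
      (Submodule.mem_iSup_of_mem (n + 1) (T_add_sub_T_mem_cyclotomicD hs))).symm

lemma T_mem_iSup_cyclotomicD (hℓ : ℓ.Prime) (t : ℤ) :
    (T t : LaurentPolynomial A) ∈ ⨆ i, cyclotomicD A ℓ i := by
  set N := 2 * t.natAbs
  have hφ : N < (ℓ ^ (N + 1)).totient := by
    rw [Nat.totient_prime_pow_succ hℓ]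
    exact (Nat.lt_pow_self hℓ.one_lt).trans_le
      (Nat.le_mul_of_pos_right _ (Nat.sub_pos_of_lt hℓ.one_lt))
  have := totient_prime_pow_succ_add hℓ N
  refine T_mem_iSup_cyclotomicD_of_mem_Ico hℓ (N + 1) ⟨?_, ?_⟩ <;> unfold boxStart <;> omega

lemma iSup_cyclotomicD_eq_top (hℓ : ℓ.Prime) : ⨆ i, cyclotomicD A ℓ i = ⊤ := by
  refine Submodule.eq_top_iff'.2 fun f => ?_
  induction f using LaurentPolynomial.induction_on' with
  | add f g hf hg => exact add_mem hf hg
  | C_mul_T n a =>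
    rw [← smul_eq_C_mul]
    exact Submodule.smul_mem _ a (T_mem_iSup_cyclotomicD hℓ n)

end Cyclotomic

theorem cyclotomicRestriction_range_general {A : Type*} [CommRing A] {ℓ : ℕ}
    (hℓ : Nat.Prime ℓ)
    (q : ∀ n : ℕ, LaurentPolynomial A ⧸ Ideal.span {cyclotomicLaurent A ℓ n}) :
    (q ∈ Set.range (cyclotomicRestriction A ℓ) ↔
      ∃ (N : ℕ) (P : ℕ → LaurentPolynomial A),
        (∀ i ≤ N, P i ∈ cyclotomicD A ℓ i) ∧
        ∀ n : ℕ, q n = Ideal.Quotient.mk (Ideal.span {cyclotomicLaurent A ℓ n})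
            (∑ i ∈ Finset.range (N + 1), P i)) ∧
    (∀ (N : ℕ) (P : ℕ → LaurentPolynomial A),
      (∀ i ≤ N, P i ∈ cyclotomicD A ℓ i) →
      (∀ n : ℕ, q n = Ideal.Quotient.mk (Ideal.span {cyclotomicLaurent A ℓ n})
          (∑ i ∈ Finset.range (N + 1), P i)) →
      q = cyclotomicRestriction A ℓ (∑ i ∈ Finset.range (N + 1), P i)) := by
  refine ⟨⟨?_, fun ⟨N, P, _, hq⟩ => ⟨_, funext fun n => (hq n).symm⟩⟩,
    fun N P _ hq => funext hq⟩
  rintro ⟨f, rfl⟩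
  have hf : f ∈ ⨆ i, cyclotomicD A ℓ i := by
    rw [Cyclotomic.iSup_cyclotomicD_eq_top hℓ]; trivial
  obtain ⟨N, P, hP, rfl⟩ := Submodule.exists_sum_range_of_mem_iSup hf
  exact ⟨N, P, hP, fun n => rfl⟩

/-- Description of the image of `c` (Lemma 2.2.5(1)): a family `(q_n)_{n ≥ 0}` lies in the
image of `c : A[z^{±1}] → ∏_{n ≥ 0} A[z^{±1}]/(Φ_{ℓⁿ})` if and only if there are `N ≥ 0` and
elements `P_i ∈ D_i` for `0 ≤ i ≤ N` with `q_n = P_0 + ⋯ + P_N mod Φ_{ℓⁿ}` for all `n ≥ 0`;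
and in that case `(q_n) = c(P_0 + ⋯ + P_N)`. -/
theorem cyclotomicRestriction_range {A : Type*} [CommRing A] {ℓ : ℕ}
    (hℓ : Nat.Prime ℓ) (hunit : IsUnit (ℓ : A))
    (q : ∀ n : ℕ, LaurentPolynomial A ⧸ Ideal.span {cyclotomicLaurent A ℓ n}) :
    (q ∈ Set.range (cyclotomicRestriction A ℓ) ↔
      ∃ (N : ℕ) (P : ℕ → LaurentPolynomial A),
        (∀ i ≤ N, P i ∈ cyclotomicD A ℓ i) ∧
        ∀ n : ℕ, q n = Ideal.Quotient.mk (Ideal.span {cyclotomicLaurent A ℓ n})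
            (∑ i ∈ Finset.range (N + 1), P i)) ∧
    (∀ (N : ℕ) (P : ℕ → LaurentPolynomial A),
      (∀ i ≤ N, P i ∈ cyclotomicD A ℓ i) →
      (∀ n : ℕ, q n = Ideal.Quotient.mk (Ideal.span {cyclotomicLaurent A ℓ n})
          (∑ i ∈ Finset.range (N + 1), P i)) →
      q = cyclotomicRestriction A ℓ (∑ i ∈ Finset.range (N + 1), P i)) :=
  cyclotomicRestriction_range_general hℓ q
end

section
/- Let A be a commutative R-algebra and let (A_i)_{i ∈ I} be a family of commutative A-algebras such that the natural ring homomorphism A → ∏_{i ∈ I} A_i is injective. Then the natural map F(A) → ∏_{i ∈ I} F(A_i), given componentwise by base change along A → A_i, is bijective. In particular, a compatible family of Hopf algebra homomorphisms f_i : A_i ⊗_R C → A_i[z^{±1}] extending the u_n descends uniquely to a Hopf algebra homomorphism f : A ⊗_R C → A[z^{±1}] extending the u_n. -/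
open LaurentPolynomial TensorProduct

noncomputable section

/-- The comultiplication of the group Hopf algebra `B[G]` (each group element is grouplike),
as a `B`-algebra homomorphism `B[G] → B[G] ⊗[B] B[G]`. -/
def groupAlgComul (B : Type*) [CommRing B] (G : Type*) [AddCommMonoid G] :
    AddMonoidAlgebra B G →ₐ[B] AddMonoidAlgebra B G ⊗[B] AddMonoidAlgebra B G :=
  AddMonoidAlgebra.lift B _ G
    { toFun := fun g => AddMonoidAlgebra.of B G g ⊗ₜ[B] AddMonoidAlgebra.of B G g
      map_one' := by
        simp only [map_one, Algebra.TensorProduct.one_def]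
      map_mul' := fun x y => by
        simp only [map_mul, Algebra.TensorProduct.tmul_mul_tmul] }

/-- The counit of the group Hopf algebra `B[G]`, as a `B`-algebra homomorphism `B[G] → B`. -/
def groupAlgCounit (B : Type*) [CommRing B] (G : Type*) [AddCommMonoid G] :
    AddMonoidAlgebra B G →ₐ[B] B :=
  AddMonoidAlgebra.lift B B G 1

/-- The homomorphism `A[G] → B[G]` of group algebras induced by an `R`-algebra homomorphism
`φ : A → B` on coefficients. -/
def groupAlgMapCoeff {R A B : Type*} [CommRing R] [CommRing A] [CommRing B]
    [Algebra R A] [Algebra R B] (G : Type*) [AddCommMonoid G] (φ : A →ₐ[R] B) :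
    AddMonoidAlgebra A G →ₐ[R] AddMonoidAlgebra B G :=
  AddMonoidAlgebra.liftNCAlgHom (AddMonoidAlgebra.singleZeroAlgHom.comp φ)
    (AddMonoidAlgebra.of B G) fun _ _ => Commute.all _ _

/-- The reduction map `A[z^{±1}] → A[z]/(z^N - 1)`, realized as the `A`-algebra homomorphism
from the group algebra of `ℤ` to the group algebra of `ℤ/Nℤ` induced by the canonical
projection `ℤ → ℤ/Nℤ`. -/
def laurentToCyclic (A : Type*) [CommRing A] (N : ℕ) :
    LaurentPolynomial A →ₐ[A] AddMonoidAlgebra A (ZMod N) :=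
  AddMonoidAlgebra.lift A _ ℤ
    ((AddMonoidAlgebra.of A (ZMod N)).comp
      (AddMonoidHom.toMultiplicative (Int.castAddHom (ZMod N))))

/-- The projection `A[z]/(z^N - 1) → A[z]/(z^M - 1)` (for `M ∣ N`) sending `z` to `z`,
realized as the map of group algebras induced by `ℤ/Nℤ → ℤ/Mℤ`. -/
def cyclicProj (A : Type*) [CommRing A] {M N : ℕ} (h : M ∣ N) :
    AddMonoidAlgebra A (ZMod N) →ₐ[A] AddMonoidAlgebra A (ZMod M) :=
  AddMonoidAlgebra.lift A _ (ZMod N)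
    ((AddMonoidAlgebra.of A (ZMod M)).comp
      (AddMonoidHom.toMultiplicative (ZMod.castHom h (ZMod M)).toAddMonoidHom))

/-- The `R`-algebra homomorphism `C ⊗[R] C → A[G] ⊗[A] A[G]` induced by
`g : C → A[G]` on each factor. -/
def tensorSquare {R : Type*} [CommRing R] {C : Type*} [CommRing C] [Algebra R C]
    {A : Type*} [CommRing A] [Algebra R A] {G : Type*} [AddCommMonoid G]
    (g : C →ₐ[R] AddMonoidAlgebra A G) :
    C ⊗[R] C →ₐ[R] AddMonoidAlgebra A G ⊗[A] AddMonoidAlgebra A G :=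
  Algebra.TensorProduct.lift
    ((Algebra.TensorProduct.includeLeft :
        AddMonoidAlgebra A G →ₐ[R] AddMonoidAlgebra A G ⊗[A] AddMonoidAlgebra A G).comp g)
    (((Algebra.TensorProduct.includeRight :
        AddMonoidAlgebra A G →ₐ[A] AddMonoidAlgebra A G ⊗[A] AddMonoidAlgebra A G).restrictScalars
          R).comp g)
    fun _ _ => Commute.all _ _

/-- An `R`-algebra homomorphism `g : C → A[G]` from an `R`-Hopf algebra `C` to the group
algebra `A[G]` over an `R`-algebra `A` is a homomorphism of Hopf algebras (equivalently, the
induced `A`-algebra homomorphism `A ⊗_R C → A[G]` is a homomorphism of Hopf algebras over `A`)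
if it is compatible with the comultiplications and the counits. -/
def IsHopfAlgHomToGroupAlg {R : Type*} [CommRing R] {C : Type*} [CommRing C]
    [HopfAlgebra R C] {A : Type*} [CommRing A] [Algebra R A] {G : Type*} [AddCommMonoid G]
    (g : C →ₐ[R] AddMonoidAlgebra A G) : Prop :=
  ((groupAlgComul A G).restrictScalars R).comp g =
      (tensorSquare g).comp (Bialgebra.comulAlgHom R C) ∧
    ((groupAlgCounit A G).restrictScalars R).comp g =
      (Algebra.ofId R A).comp (Bialgebra.counitAlgHom R C)

/-- The set `F(A)` of the paper (Theorem 2.1.2), in terms of restricted data: a homomorphism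
of Hopf algebras `A ⊗_R C → A[z^{±1}]` over `A` corresponds, by the universal property of
base change, to an `R`-algebra homomorphism `g : C → A[z^{±1}]` compatible with
comultiplications and counits.  The membership conditions are: `g` is a Hopf algebra
homomorphism, and for every `n ≥ 0` the composite of `g` with the reduction
`A[z^{±1}] → A[z]/(z^{ℓⁿ} - 1)` is the base change to `A` of `u_n`. -/
def laurentHopfHomSet {R : Type*} [CommRing R] {C : Type*} [CommRing C] [HopfAlgebra R C]
    (ℓ : ℕ) (u : ∀ n : ℕ, C →ₐ[R] AddMonoidAlgebra R (ZMod (ℓ ^ n)))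
    (A : Type*) [CommRing A] [Algebra R A] : Set (C →ₐ[R] LaurentPolynomial A) :=
  {g | IsHopfAlgHomToGroupAlg g ∧ ∀ n : ℕ,
    ((laurentToCyclic A (ℓ ^ n)).restrictScalars R).comp g =
      (groupAlgMapCoeff (ZMod (ℓ ^ n)) (Algebra.ofId R A)).comp (u n)}

/-!
Base change acts on coefficients and `A → ∏ i, B i` is injective, so the map is injective and
membership in `F` can be tested after base change. What remains is to descend a family
`h i ∈ F(B i)` to an algebra homomorphism over `A`, i.e. to show that for each `c : C` the Laurent
polynomials `h i c` all come from a single Laurent polynomial over `R`.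

Through `u m` the coalgebra `C` is graded by `ℤ/ℓᵐ`; let `p m j = weightProj u m j` be the
projection `c ↦ c₍₁₎ (u m c₍₂₎)_j` onto degree `j`. Coassociativity and the compatibility of `u M`
with the comultiplications give `p M j' ∘ p m j = [j' ≡ j] p M j'` for `m ≤ M`. For `g ∈ F(B)`,
once `m` separates the exponents of `g c` modulo `ℓᵐ`, the reduction condition identifies the
coefficient of `zᵏ` in `g c` with the image of `(u m c)_k = ε (p m k c)`. With the relation above
this puts every exponent of every `g c` into `K = {k | ∀ m, p m k c ≠ 0}`, and makes `g c` the base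
change of a Laurent polynomial over `R` depending on `c` alone, provided `K` is finite. An infinite
`K` would yield a sequence `p (n t) (k t) c` in the finitely generated submodule spanned by the
`c₍₁₎`, none of whose terms lies in the span of the earlier ones (a later projection kills those
but not it), which is impossible over the Noetherian ring `R`.
-/

section GroupAlgebra

variable {R A B G H : Type*} [CommRing R] [CommRing A] [CommRing B] [Algebra R A] [Algebra R B]

variable (A G) in
def tensorCoeffEquiv : (AddMonoidAlgebra A G ⊗[A] AddMonoidAlgebra A G) ≃ₗ[A] (G × G →₀ A) :=
  (TensorProduct.congr (AddMonoidAlgebra.coeffLinearEquiv A)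
    (AddMonoidAlgebra.coeffLinearEquiv A)).trans (finsuppTensorFinsupp' A G G)

@[simp]
theorem tensorCoeffEquiv_tmul (x y : AddMonoidAlgebra A G) (p q : G) :
    tensorCoeffEquiv A G (x ⊗ₜ[A] y) (p, q) = x.coeff p * y.coeff q :=
  finsuppTensorFinsupp'_apply_apply A G G x.coeff y.coeff p q

variable [AddCommMonoid G] [AddCommMonoid H]

theorem groupAlgMapCoeff_eq_mapAlgHom (φ : A →ₐ[R] B) :
    groupAlgMapCoeff G φ = AddMonoidAlgebra.mapAlgHom G φ := by
  ext g : 2 <;> simp [groupAlgMapCoeff]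

@[simp]
theorem coeff_groupAlgMapCoeff (φ : A →ₐ[R] B) (x : AddMonoidAlgebra A G) (g : G) :
    (groupAlgMapCoeff G φ x).coeff g = φ (x.coeff g) := by
  rw [groupAlgMapCoeff_eq_mapAlgHom, AddMonoidAlgebra.coeff_mapAlgHom]

theorem coeff_groupAlgMapCoeff_eq_mapRange (φ : A →ₐ[R] B) (x : AddMonoidAlgebra A G) :
    (groupAlgMapCoeff G φ x).coeff = x.coeff.mapRange φ (map_zero φ) := by
  ext g
  simp

theorem groupAlgMapCoeff_groupAlgMapCoeff_ofId (φ : A →ₐ[R] B) (x : AddMonoidAlgebra R G) :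
    groupAlgMapCoeff G φ (groupAlgMapCoeff G (Algebra.ofId R A) x) =
      groupAlgMapCoeff G (Algebra.ofId R B) x := by
  ext g
  simp

theorem laurentToCyclic_eq_mapDomainAlgHom (N : ℕ) :
    laurentToCyclic A N = AddMonoidAlgebra.mapDomainAlgHom A A (Int.castAddHom (ZMod N)) :=
  AddMonoidAlgebra.algHom_ext (fun k => by
    simp [laurentToCyclic, -LaurentPolynomial.single_eq_C_mul_T]) (Subsingleton.elim _ _)

theorem cyclicProj_eq_mapDomainAlgHom {M N : ℕ} (h : M ∣ N) :
    cyclicProj A h =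
      AddMonoidAlgebra.mapDomainAlgHom A A (ZMod.castHom h (ZMod M)).toAddMonoidHom := by
  ext
  simp [cyclicProj]

theorem cyclicProj_refl (N : ℕ) : cyclicProj A (dvd_refl N) = AlgHom.id A _ := by
  rw [cyclicProj_eq_mapDomainAlgHom, ZMod.castHom_self]
  exact AddMonoidAlgebra.mapDomainAlgHom_id

theorem cyclicProj_comp_cyclicProj {M N K : ℕ} (h₁ : M ∣ N) (h₂ : N ∣ K) :
    (cyclicProj A h₁).comp (cyclicProj A h₂) = cyclicProj A (h₁.trans h₂) := by
  simp only [cyclicProj_eq_mapDomainAlgHom, ← AddMonoidAlgebra.mapDomainAlgHom_comp,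
    ← ZMod.castHom_comp h₁ h₂]
  rfl

@[simp]
theorem groupAlgCounit_single (g : G) (a : A) :
    groupAlgCounit A G (AddMonoidAlgebra.single g a) = a := by
  simp [groupAlgCounit]

@[simp]
theorem groupAlgComul_single (g : G) (a : A) :
    groupAlgComul A G (AddMonoidAlgebra.single g a) =
      AddMonoidAlgebra.single g a ⊗ₜ[A] AddMonoidAlgebra.single g 1 := by
  simp [groupAlgComul, TensorProduct.smul_tmul']

theorem groupAlgCounit_groupAlgMapCoeff (φ : A →ₐ[R] B) (x : AddMonoidAlgebra A G) :
    groupAlgCounit B G (groupAlgMapCoeff G φ x) = φ (groupAlgCounit A G x) := by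
  induction x using AddMonoidAlgebra.induction_linear with
  | zero => simp
  | add x y hx hy => simp [hx, hy]
  | single g a => simp [groupAlgMapCoeff_eq_mapAlgHom]

theorem laurentToCyclic_groupAlgMapCoeff (φ : A →ₐ[R] B) (N : ℕ) (x : LaurentPolynomial A) :
    laurentToCyclic B N (groupAlgMapCoeff ℤ φ x) =
      groupAlgMapCoeff (ZMod N) φ (laurentToCyclic A N x) := by
  induction x using AddMonoidAlgebra.induction_linear with
  | zero => simp
  | add x y hx hy => simp only [map_add, hx, hy]
  | single k a =>
    simp [laurentToCyclic_eq_mapDomainAlgHom, groupAlgMapCoeff_eq_mapAlgHom,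
      -LaurentPolynomial.single_eq_C_mul_T]

theorem tensorCoeffEquiv_groupAlgComul (x : AddMonoidAlgebra A G) :
    tensorCoeffEquiv A G (groupAlgComul A G x) = x.coeff.mapDomain fun g => (g, g) := by
  classical
  induction x using AddMonoidAlgebra.induction_linear with
  | zero => simp
  | add x y hx hy => simp [hx, hy, Finsupp.mapDomain_add]
  | single g a =>
    ext ⟨p, q⟩
    simp only [groupAlgComul_single, tensorCoeffEquiv_tmul, AddMonoidAlgebra.coeff_single,
      Finsupp.mapDomain_single, Finsupp.single_apply, Prod.mk.injEq]
    split_ifs <;> grind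

theorem tensorCoeffEquiv_groupAlgComul_groupAlgMapCoeff (φ : A →ₐ[R] B)
    (x : AddMonoidAlgebra A G) :
    tensorCoeffEquiv B G (groupAlgComul B G (groupAlgMapCoeff G φ x)) =
      (tensorCoeffEquiv A G (groupAlgComul A G x)).mapRange φ (map_zero φ) := by
  rw [tensorCoeffEquiv_groupAlgComul, tensorCoeffEquiv_groupAlgComul,
    coeff_groupAlgMapCoeff_eq_mapRange, Finsupp.mapDomain_mapRange _ _ _ _ (map_add φ)]

theorem tensorSquare_tmul {C : Type*} [CommRing C] [Algebra R C]
    (g : C →ₐ[R] AddMonoidAlgebra A G) (c d : C) :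
    tensorSquare g (c ⊗ₜ[R] d) = g c ⊗ₜ[A] g d := by
  simp [tensorSquare]

theorem tensorCoeffEquiv_tensorSquare_comp {C : Type*} [CommRing C] [Algebra R C]
    (φ : A →ₐ[R] B) (g : C →ₐ[R] AddMonoidAlgebra A G) (X : C ⊗[R] C) :
    tensorCoeffEquiv B G (tensorSquare ((groupAlgMapCoeff G φ).comp g) X) =
      (tensorCoeffEquiv A G (tensorSquare g X)).mapRange φ (map_zero φ) := by
  induction X with
  | zero => simp
  | tmul c d => ext ⟨p, q⟩; simp [tensorSquare_tmul]
  | add X Y hX hY => simp only [map_add, hX, hY, Finsupp.mapRange_add (map_add φ)]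

theorem mul'_map_coeff_groupAlgComul [DecidableEq H] (f : G →+ H) (p : G) (q : H)
    (x : AddMonoidAlgebra A G) :
    LinearMap.mul' A A (TensorProduct.map
      (Finsupp.lapply p ∘ₗ (AddMonoidAlgebra.coeffLinearEquiv A).toLinearMap)
      (Finsupp.lapply q ∘ₗ (AddMonoidAlgebra.coeffLinearEquiv A).toLinearMap ∘ₗ
        (AddMonoidAlgebra.mapDomainAlgHom A A f).toLinearMap)
      (groupAlgComul A G x)) = if f p = q then x.coeff p else 0 := by
  induction x using AddMonoidAlgebra.induction_linear with
  | zero => simp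
  | add x y hx hy =>
    simp only [map_add, hx, hy, AddMonoidAlgebra.coeff_add]
    split_ifs <;> simp
  | single g a => by_cases hg : g = p <;> simp [Finsupp.single_apply, hg]

end GroupAlgebra

section BaseChange

variable {R A C G ι : Type*} [CommRing R] [CommRing A] [Algebra R A] [CommRing C]
  [HopfAlgebra R C] [AddCommMonoid G] {B : ι → Type*} [∀ i, CommRing (B i)]
  [∀ i, Algebra R (B i)] {φ : ∀ i, A →ₐ[R] B i}

theorem finsupp_eq_iff_forall_mapRange_eq (hφ : Function.Injective fun a i => φ i a)
    {α : Type*} {x y : α →₀ A} :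
    x = y ↔ ∀ i, x.mapRange (φ i) (map_zero _) = y.mapRange (φ i) (map_zero _) :=
  ⟨by rintro rfl; simp, fun h => Finsupp.ext fun a => hφ <| funext fun i => by
    simpa using congr($(h i) a)⟩

theorem eq_iff_forall_groupAlgMapCoeff_eq (hφ : Function.Injective fun a i => φ i a)
    {x y : AddMonoidAlgebra A G} :
    x = y ↔ ∀ i, groupAlgMapCoeff G (φ i) x = groupAlgMapCoeff G (φ i) y := by
  simp only [← AddMonoidAlgebra.coeff_injective.eq_iff, coeff_groupAlgMapCoeff_eq_mapRange]
  exact finsupp_eq_iff_forall_mapRange_eq hφ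

theorem isHopfAlgHomToGroupAlg_iff_forall_comp (hφ : Function.Injective fun a i => φ i a)
    (g : C →ₐ[R] AddMonoidAlgebra A G) :
    IsHopfAlgHomToGroupAlg g ↔
      ∀ i, IsHopfAlgHomToGroupAlg ((groupAlgMapCoeff G (φ i)).comp g) := by
  have comul (c : C) : groupAlgComul A G (g c) = tensorSquare g (Coalgebra.comul c) ↔
      ∀ i, groupAlgComul (B i) G (groupAlgMapCoeff G (φ i) (g c)) =
        tensorSquare ((groupAlgMapCoeff G (φ i)).comp g) (Coalgebra.comul c) := by
    simp only [← (tensorCoeffEquiv _ G).injective.eq_iff,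
      tensorCoeffEquiv_groupAlgComul_groupAlgMapCoeff, tensorCoeffEquiv_tensorSquare_comp]
    exact finsupp_eq_iff_forall_mapRange_eq hφ
  have counit (c : C) : groupAlgCounit A G (g c) = algebraMap R A (Coalgebra.counit c) ↔
      ∀ i, groupAlgCounit (B i) G (groupAlgMapCoeff G (φ i) (g c)) =
        algebraMap R (B i) (Coalgebra.counit c) := by
    simp only [groupAlgCounit_groupAlgMapCoeff, ← (φ _).commutes]
    exact ⟨fun h i => congrArg _ h, fun h => hφ (funext h)⟩
  simp only [IsHopfAlgHomToGroupAlg, AlgHom.ext_iff, AlgHom.comp_apply,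
    AlgHom.restrictScalars_apply, Bialgebra.comulAlgHom_apply, Bialgebra.counitAlgHom_apply,
    Algebra.ofId_apply, comul, counit]
  rw [forall_and]
  exact and_congr forall_comm forall_comm

theorem mem_laurentHopfHomSet_iff_forall_comp (hφ : Function.Injective fun a i => φ i a)
    {ℓ : ℕ} (u : ∀ n : ℕ, C →ₐ[R] AddMonoidAlgebra R (ZMod (ℓ ^ n)))
    (g : C →ₐ[R] LaurentPolynomial A) :
    g ∈ laurentHopfHomSet ℓ u A ↔
      ∀ i, (groupAlgMapCoeff ℤ (φ i)).comp g ∈ laurentHopfHomSet ℓ u (B i) := by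
  have reduce (n : ℕ) (c : C) : laurentToCyclic A (ℓ ^ n) (g c) =
        groupAlgMapCoeff (ZMod (ℓ ^ n)) (Algebra.ofId R A) (u n c) ↔
      ∀ i, laurentToCyclic (B i) (ℓ ^ n) (groupAlgMapCoeff ℤ (φ i) (g c)) =
        groupAlgMapCoeff (ZMod (ℓ ^ n)) (Algebra.ofId R (B i)) (u n c) := by
    rw [eq_iff_forall_groupAlgMapCoeff_eq hφ]
    simp only [laurentToCyclic_groupAlgMapCoeff, groupAlgMapCoeff_groupAlgMapCoeff_ofId]
  simp only [laurentHopfHomSet, Set.mem_ofPred_eq, isHopfAlgHomToGroupAlg_iff_forall_comp hφ,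
    AlgHom.ext_iff, AlgHom.comp_apply, AlgHom.restrictScalars_apply, reduce]
  rw [forall_and]
  exact and_congr Iff.rfl ⟨fun h i n c => h n c i, fun h n c i => h i n c⟩

end BaseChange

theorem AlgHom.exists_forall_comp_eq {R C S ι : Type*} {T : ι → Type*} [CommSemiring R]
    [Semiring C] [Semiring S] [∀ i, Semiring (T i)] [Algebra R C] [Algebra R S]
    [∀ i, Algebra R (T i)] {ψ : ∀ i, S →ₐ[R] T i} (hψ : Function.Injective fun s i => ψ i s)
    (h : ∀ i, C →ₐ[R] T i) (hlift : ∀ c, ∃ s, ∀ i, ψ i s = h i c) :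
    ∃ g : C →ₐ[R] S, ∀ i, (ψ i).comp g = h i := by
  let Ψ := AlgHom.pi ψ
  have hrange (c : C) : AlgHom.pi h c ∈ Ψ.range := by
    obtain ⟨s, hs⟩ := hlift c
    exact ⟨s, funext hs⟩
  let H := (AlgHom.pi h).codRestrict Ψ.range hrange
  refine ⟨(AlgEquiv.ofInjective Ψ hψ).symm.toAlgHom.comp H, fun i => AlgHom.ext fun c => ?_⟩
  exact congrFun congr(Subtype.val $((AlgEquiv.ofInjective Ψ hψ).apply_symm_apply (H c))) i

section Contraction

open Coalgebra WithConv

variable {R C : Type*} [CommRing R] [AddCommGroup C] [Module R C] [Coalgebra R C]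

def comulContract (f : C →ₗ[R] R) : C →ₗ[R] C :=
  (TensorProduct.rid R C).toLinearMap ∘ₗ f.lTensor C ∘ₗ comul

theorem comulContract_apply_of_repr (f : C →ₗ[R] R) {c : C} {ι : Type*} (𝓡 : Repr R c ι) :
    comulContract f c = ∑ i ∈ 𝓡.index, f (𝓡.right i) • 𝓡.left i := by
  simp [comulContract, ← 𝓡.eq]

theorem comulContract_mem_span (f : C →ₗ[R] R) {c : C} {ι : Type*} (𝓡 : Repr R c ι) :
    comulContract f c ∈ Submodule.span R (𝓡.left '' 𝓡.index) := by
  rw [comulContract_apply_of_repr f 𝓡]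
  exact Submodule.sum_mem _ fun i hi =>
    Submodule.smul_mem _ _ (Submodule.subset_span ⟨i, hi, rfl⟩)

theorem counit_comulContract (f : C →ₗ[R] R) (c : C) :
    counit (R := R) (comulContract f c) = f c := by
  conv_rhs => rw [← sum_counit_smul (ℛ R c)]
  simp [comulContract_apply_of_repr f (ℛ R c), mul_comm]

theorem comulContract_comulContract (f g : C →ₗ[R] R) (c : C) :
    comulContract f (comulContract g c) = comulContract (toConv f * toConv g).ofConv c := by
  let Θ : C ⊗[R] (C ⊗[R] C) →ₗ[R] C := (TensorProduct.rid R C).toLinearMap ∘ₗ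
    (LinearMap.mul' R R ∘ₗ TensorProduct.map f g).lTensor C
  have hΘ (x y z : C) : Θ (x ⊗ₜ (y ⊗ₜ z)) = (f y * g z) • x := by simp [Θ]
  have coassoc := congr(Θ $(sum_tmul_tmul_eq (ℛ R c) (fun i => ℛ R ((ℛ R c).left i))
    (fun i => ℛ R ((ℛ R c).right i))))
  simp only [map_sum, hΘ] at coassoc
  rw [comulContract_apply_of_repr _ (ℛ R c), comulContract_apply_of_repr _ (ℛ R c)]
  calc _ = _ := by
        simp only [map_sum, map_smul, comulContract_apply_of_repr f (ℛ R ((ℛ R c).left _)),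
          Finset.smul_sum, smul_smul, mul_comm (g _)]
    _ = _ := coassoc
    _ = _ := by simp only [← Finset.sum_smul, (ℛ R _).convMul_apply]

end Contraction

section Weights

open Coalgebra WithConv

variable {R C : Type*} [CommRing R] [CommRing C] [HopfAlgebra R C] {ℓ : ℕ}
  (u : ∀ n : ℕ, C →ₐ[R] AddMonoidAlgebra R (ZMod (ℓ ^ n)))

theorem cyclicProj_comp_eq_of_le
    (hucomp : ∀ n, (cyclicProj R (pow_dvd_pow ℓ (Nat.le_succ n))).comp (u (n + 1)) = u n)
    {m M : ℕ} (h : m ≤ M) : (cyclicProj R (pow_dvd_pow ℓ h)).comp (u M) = u m := by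
  induction M, h using Nat.le_induction with
  | base => rw [cyclicProj_refl, AlgHom.id_comp]
  | succ M h ih =>
    rwa [← hucomp M, ← AlgHom.comp_assoc, cyclicProj_comp_cyclicProj] at ih

def weightCoeff (m : ℕ) (j : ZMod (ℓ ^ m)) : C →ₗ[R] R :=
  Finsupp.lapply j ∘ₗ (AddMonoidAlgebra.coeffLinearEquiv R).toLinearMap ∘ₗ (u m).toLinearMap

def weightProj (m : ℕ) (j : ZMod (ℓ ^ m)) : C →ₗ[R] C := comulContract (weightCoeff u m j)

variable {u}

theorem weightCoeff_convMul_weightCoeff (hu : ∀ n, IsHopfAlgHomToGroupAlg (u n))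
    (hucomp : ∀ n, (cyclicProj R (pow_dvd_pow ℓ (Nat.le_succ n))).comp (u (n + 1)) = u n)
    {m M : ℕ} (h : m ≤ M) (j' : ZMod (ℓ ^ M)) (j : ZMod (ℓ ^ m)) :
    (toConv (weightCoeff u M j') * toConv (weightCoeff u m j)).ofConv =
      if ZMod.castHom (pow_dvd_pow ℓ h) _ j' = j then weightCoeff u M j' else 0 := by
  ext c
  let F := LinearMap.mul' R R ∘ₗ TensorProduct.map
    (Finsupp.lapply j' ∘ₗ (AddMonoidAlgebra.coeffLinearEquiv R).toLinearMap)
    (Finsupp.lapply j ∘ₗ (AddMonoidAlgebra.coeffLinearEquiv R).toLinearMap ∘ₗ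
      (cyclicProj R (pow_dvd_pow ℓ h)).toLinearMap)
  have hcomul : groupAlgComul R _ (u M c) = tensorSquare (u M) (comul c) :=
    congr($((hu M).1) c)
  have hF : F (tensorSquare (u M) (comul c)) =
      (toConv (weightCoeff u M j') * toConv (weightCoeff u m j)).ofConv c := by
    rw [← (ℛ R c).eq]
    simp [F, weightCoeff, tensorSquare_tmul, (ℛ R c).convMul_apply,
      ← cyclicProj_comp_eq_of_le u hucomp h]
  rw [← hF, ← hcomul, LinearMap.comp_apply, cyclicProj_eq_mapDomainAlgHom,
    mul'_map_coeff_groupAlgComul]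
  split_ifs <;> simp_all [weightCoeff]

theorem weightProj_weightProj (hu : ∀ n, IsHopfAlgHomToGroupAlg (u n))
    (hucomp : ∀ n, (cyclicProj R (pow_dvd_pow ℓ (Nat.le_succ n))).comp (u (n + 1)) = u n)
    {m M : ℕ} (h : m ≤ M) (j' : ZMod (ℓ ^ M)) (j : ZMod (ℓ ^ m)) (c : C) :
    weightProj u M j' (weightProj u m j c) =
      if ZMod.castHom (pow_dvd_pow ℓ h) _ j' = j then weightProj u M j' c else 0 := by
  rw [weightProj, weightProj, comulContract_comulContract,
    weightCoeff_convMul_weightCoeff hu hucomp h]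
  split_ifs <;> simp [comulContract]

theorem counit_weightProj (m : ℕ) (j : ZMod (ℓ ^ m)) (c : C) :
    counit (R := R) (weightProj u m j c) = (u m c).coeff j :=
  counit_comulContract _ c

theorem weightProj_intCast_eq_zero_of_le (hu : ∀ n, IsHopfAlgHomToGroupAlg (u n))
    (hucomp : ∀ n, (cyclicProj R (pow_dvd_pow ℓ (Nat.le_succ n))).comp (u (n + 1)) = u n)
    {m M : ℕ} (h : m ≤ M) (k : ℤ) {c : C} (hk : weightProj u m k c = 0) :
    weightProj u M k c = 0 := by
  have := weightProj_weightProj hu hucomp h k k c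
  rwa [map_intCast, if_pos rfl, hk, map_zero, eq_comm] at this

end Weights

section Separation

open Filter

variable {ℓ : ℕ}

theorem injOn_intCast_of_natAbs_sub_lt {N : ℕ} {S : Set ℤ}
    (hS : ∀ x ∈ S, ∀ y ∈ S, (x - y).natAbs < N) : Set.InjOn (Int.cast : ℤ → ZMod N) S := by
  intro x hx y hy hxy
  rw [ZMod.intCast_eq_intCast_iff_dvd_sub] at hxy
  by_contra hne
  have hle := Int.natAbs_le_of_dvd_ne_zero hxy (sub_ne_zero.mpr (Ne.symm hne))
  rw [Int.natAbs_natCast] at hle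
  exact (hS y hy x hx).not_ge hle

theorem Set.Finite.eventually_injOn_intCast (hℓ : 1 < ℓ) {S : Set ℤ} (hS : S.Finite) :
    ∀ᶠ m in atTop, Set.InjOn (Int.cast : ℤ → ZMod (ℓ ^ m)) S := by
  obtain ⟨a, ha⟩ := hS.bddBelow
  obtain ⟨b, hb⟩ := hS.bddAbove
  filter_upwards [eventually_ge_atTop (b - a).natAbs] with m hm
  refine injOn_intCast_of_natAbs_sub_lt fun x hx y hy => ?_
  have := ha hx; have := hb hx; have := ha hy; have := hb hy
  have : m < ℓ ^ m := Nat.lt_pow_self hℓ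
  omega

theorem Set.Infinite.exists_infinite_setOf_intCast_ne (hℓ : 1 < ℓ) {S : Set ℤ}
    (hS : S.Infinite) : ∃ k ∈ S, ∃ n, {z ∈ S | (z : ZMod (ℓ ^ n)) ≠ k}.Infinite := by
  obtain ⟨x, hx, y, hy, hxy⟩ := hS.nontrivial
  obtain ⟨n, hn⟩ := ((Set.toFinite {x, y}).eventually_injOn_intCast hℓ).exists
  have hne : (x : ZMod (ℓ ^ n)) ≠ y := fun h => hxy (hn (by simp) (by simp) h)
  have hcover : S ⊆ {z ∈ S | (z : ZMod (ℓ ^ n)) ≠ x} ∪ {z ∈ S | (z : ZMod (ℓ ^ n)) ≠ y} :=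
    fun z hz => by
      by_cases h : (z : ZMod (ℓ ^ n)) = x
      · exact Or.inr ⟨hz, h ▸ hne⟩
      · exact Or.inl ⟨hz, h⟩
  rcases Set.infinite_union.mp (hS.mono hcover) with h | h
  · exact ⟨x, hx, n, h⟩
  · exact ⟨y, hy, n, h⟩

theorem Set.Infinite.exists_seq_intCast_ne (hℓ : 1 < ℓ) {K : Set ℤ} (hK : K.Infinite) :
    ∃ (k : ℕ → ℤ) (n : ℕ → ℕ), (∀ t, k t ∈ K) ∧
      ∀ t s, t < s → (k s : ZMod (ℓ ^ n t)) ≠ k t := by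
  choose k hk n hn using fun S : {S : Set ℤ // S.Infinite} =>
    S.2.exists_infinite_setOf_intCast_ne hℓ
  let next (S : {S : Set ℤ // S.Infinite}) : {S : Set ℤ // S.Infinite} := ⟨_, hn S⟩
  let S (t : ℕ) := next^[t] ⟨K, hK⟩
  have hS : Antitone fun t => (S t).1 := antitone_nat_of_succ_le fun t => by
    simp only [S, Function.iterate_succ_apply']
    exact Set.sep_subset _ _
  refine ⟨fun t => k (S t), fun t => n (S t), fun t => hS (Nat.zero_le t) (hk _),
    fun t s hts => ?_⟩
  have : k (S s) ∈ (S (t + 1)).1 := hS hts (hk _)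
  simp only [S, Function.iterate_succ_apply'] at this
  exact this.2

end Separation

theorem Submodule.FG.exists_mem_span_image_Iio {R M : Type*} [CommRing R] [IsNoetherianRing R]
    [AddCommGroup M] [Module R M] {N : Submodule R M} (hN : N.FG) {w : ℕ → M}
    (hw : ∀ n, w n ∈ N) : ∃ n, w n ∈ Submodule.span R (w '' Set.Iio n) := by
  have := isNoetherian_of_fg_of_noetherian N hN
  let V : ℕ →o Submodule R N :=
    ⟨fun n => (Submodule.span R (w '' Set.Iio n)).comap N.subtype, fun a b hab =>
      Submodule.comap_mono (Submodule.span_mono (Set.image_mono (Set.Iio_subset_Iio hab)))⟩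
  obtain ⟨n, hn⟩ := monotone_stabilizes_iff_noetherian.mpr inferInstance V
  refine ⟨n, ?_⟩
  have : (⟨w n, hw n⟩ : N) ∈ V (n + 1) := Submodule.subset_span ⟨n, Nat.lt_succ_self n, rfl⟩
  rwa [← hn (n + 1) n.le_succ] at this

section Descent

open Coalgebra Filter

variable {R C A : Type*} [CommRing R] [CommRing C] [HopfAlgebra R C] [CommRing A] [Algebra R A]
  {ℓ : ℕ} {u : ∀ n : ℕ, C →ₐ[R] AddMonoidAlgebra R (ZMod (ℓ ^ n))}

theorem finite_setOf_forall_weightProj_ne_zero [IsNoetherianRing R] (hℓ : 1 < ℓ)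
    (hu : ∀ n, IsHopfAlgHomToGroupAlg (u n))
    (hucomp : ∀ n, (cyclicProj R (pow_dvd_pow ℓ (Nat.le_succ n))).comp (u (n + 1)) = u n)
    (c : C) : {k : ℤ | ∀ m, weightProj u m k c ≠ 0}.Finite := by
  by_contra hinf
  obtain ⟨k, n, hkK, hsep⟩ := Set.Infinite.exists_seq_intCast_ne hℓ hinf
  let w (t : ℕ) := weightProj u (n t) (k t) c
  obtain ⟨N, hN⟩ := (Submodule.fg_span ((ℛ R c).index.finite_toSet.image _)).exists_mem_span_image_Iio
    (w := w) fun t => comulContract_mem_span _ (ℛ R c)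
  let M := (Finset.range (N + 1)).sup n
  have hle (t : ℕ) (ht : t ≤ N) : n t ≤ M :=
    Finset.le_sup (Finset.mem_range.mpr (Nat.lt_succ_of_le ht))
  let P := weightProj u M (k N)
  have hkill : w '' Set.Iio N ⊆ LinearMap.ker P := by
    rintro _ ⟨t, ht, rfl⟩
    rw [SetLike.mem_coe, LinearMap.mem_ker, weightProj_weightProj hu hucomp (hle t ht.le),
      map_intCast, if_neg (hsep t N ht)]
  have hself : P (w N) = P c := by
    rw [weightProj_weightProj hu hucomp (hle N le_rfl), map_intCast, if_pos rfl]
  exact hkK N M (hself ▸ Submodule.span_le.mpr hkill hN)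

theorem coeff_apply_eq_algebraMap_of_injOn {g : C →ₐ[R] LaurentPolynomial A}
    (hg : g ∈ laurentHopfHomSet ℓ u A) {c : C} {m : ℕ} {S : Set ℤ}
    (hsupp : ↑(g c).coeff.support ⊆ S) (hS : Set.InjOn (Int.cast : ℤ → ZMod (ℓ ^ m)) S)
    {k : ℤ} (hk : k ∈ S) : (g c).coeff k = algebraMap R A ((u m c).coeff k) := by
  have := congr(AddMonoidAlgebra.coeff ($(hg.2 m) c) (k : ZMod (ℓ ^ m)))
  simp only [AlgHom.comp_apply, AlgHom.restrictScalars_apply, laurentToCyclic_eq_mapDomainAlgHom,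
    AddMonoidAlgebra.mapDomainAlgHom_apply, AddMonoidAlgebra.coeff_mapDomain,
    coeff_groupAlgMapCoeff, Algebra.ofId_apply] at this
  rwa [Int.coe_castAddHom, Finsupp.mapDomain_apply' S _ hsupp hS hk] at this

theorem support_subset_setOf_forall_weightProj_ne_zero (hℓ : 1 < ℓ)
    (hu : ∀ n, IsHopfAlgHomToGroupAlg (u n))
    (hucomp : ∀ n, (cyclicProj R (pow_dvd_pow ℓ (Nat.le_succ n))).comp (u (n + 1)) = u n)
    {g : C →ₐ[R] LaurentPolynomial A} (hg : g ∈ laurentHopfHomSet ℓ u A) (c : C) :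
    ↑(g c).coeff.support ⊆ {k : ℤ | ∀ m, weightProj u m k c ≠ 0} := by
  intro k hk m hm
  obtain ⟨M, hM, hmM⟩ := (((g c).coeff.support.finite_toSet.eventually_injOn_intCast hℓ).and
    (eventually_ge_atTop m)).exists
  have := coeff_apply_eq_algebraMap_of_injOn hg subset_rfl hM hk
  rw [← counit_weightProj, weightProj_intCast_eq_zero_of_le hu hucomp hmM k hm, map_zero,
    map_zero] at this
  exact Finsupp.mem_support_iff.mp hk this

theorem exists_forall_mem_laurentHopfHomSet_apply_eq [IsNoetherianRing R] (hℓ : 1 < ℓ)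
    (hu : ∀ n, IsHopfAlgHomToGroupAlg (u n))
    (hucomp : ∀ n, (cyclicProj R (pow_dvd_pow ℓ (Nat.le_succ n))).comp (u (n + 1)) = u n)
    (c : C) : ∃ P : LaurentPolynomial R, ∀ (B : Type*) [CommRing B] [Algebra R B],
      ∀ g ∈ laurentHopfHomSet ℓ u B, g c = groupAlgMapCoeff ℤ (Algebra.ofId R B) P := by
  have hK := finite_setOf_forall_weightProj_ne_zero hℓ hu hucomp c
  obtain ⟨m, hm⟩ := (hK.eventually_injOn_intCast hℓ).exists
  refine ⟨⟨Finsupp.indicator hK.toFinset fun k _ => (u m c).coeff k⟩, fun B _ _ g hg => ?_⟩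
  have hsupp := support_subset_setOf_forall_weightProj_ne_zero hℓ hu hucomp hg c
  ext k
  rw [coeff_groupAlgMapCoeff, Finsupp.indicator_apply]
  split_ifs with hk
  · exact coeff_apply_eq_algebraMap_of_injOn hg hsupp hm (by simpa using hk)
  · rw [map_zero]
    exact Finsupp.notMem_support_iff.mp fun h => hk (by simpa using hsupp h)

end Descent

theorem hopfHomSet_bijOn_of_injective_into_product_general
    {R : Type*} [CommRing R] {C : Type*} [CommRing C] [HopfAlgebra R C]
    {ℓ : ℕ} (hℓ : Nat.Prime ℓ)
    (hR : Algebra.FiniteType ℤ R)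
    (u : ∀ n : ℕ, C →ₐ[R] AddMonoidAlgebra R (ZMod (ℓ ^ n)))
    (hu : ∀ n, IsHopfAlgHomToGroupAlg (u n))
    (hucomp : ∀ n, (cyclicProj R (pow_dvd_pow ℓ (Nat.le_succ n))).comp (u (n + 1)) = u n)
    (A : Type*) [CommRing A] [Algebra R A]
    {ι : Type*} (B : ι → Type*) [∀ i, CommRing (B i)] [∀ i, Algebra R (B i)]
    [∀ i, Algebra A (B i)] [∀ i, IsScalarTower R A (B i)]
    (hinj : Function.Injective (Pi.ringHom fun i => algebraMap A (B i))) :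
    Set.BijOn
      (fun (g : C →ₐ[R] LaurentPolynomial A) (i : ι) =>
        (groupAlgMapCoeff ℤ (IsScalarTower.toAlgHom R A (B i))).comp g)
      (laurentHopfHomSet ℓ u A)
      (Set.univ.pi fun i => laurentHopfHomSet ℓ u (B i)) := by
  have : IsNoetherianRing R := Algebra.FiniteType.isNoetherianRing ℤ R
  have hφ : Function.Injective fun a i => IsScalarTower.toAlgHom R A (B i) a := hinj
  have hmem := mem_laurentHopfHomSet_iff_forall_comp hφ u
  refine ⟨fun g hg i _ => (hmem g).mp hg i, fun g _ g' _ h => AlgHom.ext fun c =>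
    (eq_iff_forall_groupAlgMapCoeff_eq hφ).mpr fun i => congr($(congrFun h i) c), fun h hh => ?_⟩
  have hlift (c : C) : ∃ P : LaurentPolynomial A,
      ∀ i, groupAlgMapCoeff ℤ (IsScalarTower.toAlgHom R A (B i)) P = h i c := by
    obtain ⟨P, hP⟩ := exists_forall_mem_laurentHopfHomSet_apply_eq hℓ.one_lt hu hucomp c
    exact ⟨groupAlgMapCoeff ℤ (Algebra.ofId R A) P, fun i => by
      rw [groupAlgMapCoeff_groupAlgMapCoeff_ofId, hP (B i) (h i) (hh i trivial)]⟩
  obtain ⟨g, hg⟩ := AlgHom.exists_forall_comp_eq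
    (fun x y hxy => (eq_iff_forall_groupAlgMapCoeff_eq hφ).mpr (congrFun hxy)) h hlift
  exact ⟨g, (hmem g).mpr fun i => (hg i).symm ▸ hh i trivial, funext hg⟩

/-- Lemma 2.2.7 (descent along an injection into a product): let `ℓ` be a prime invertible in
`R`, `R` finitely generated over `ℤ`, `C` a finitely presented commutative Hopf `R`-algebra,
and `u_n : C → R[z]/(z^{ℓⁿ} - 1)` a compatible family of Hopf algebra homomorphisms.  Let `A`
be a commutative `R`-algebra and `(B i)` a family of commutative `A`-algebras such that
`A → ∏ i, B i` is injective.  Then the natural map `F(A) → ∏ i, F(B i)`, given componentwise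
by base change along `A → B i`, is bijective. -/
theorem hopfHomSet_bijOn_of_injective_into_product
    {R : Type*} [CommRing R] {C : Type*} [CommRing C] [HopfAlgebra R C]
    {ℓ : ℕ} (hℓ : Nat.Prime ℓ) (hℓR : IsUnit (ℓ : R))
    (hR : Algebra.FiniteType ℤ R) (hC : Algebra.FinitePresentation R C)
    (u : ∀ n : ℕ, C →ₐ[R] AddMonoidAlgebra R (ZMod (ℓ ^ n)))
    (hu : ∀ n, IsHopfAlgHomToGroupAlg (u n))
    (hucomp : ∀ n, (cyclicProj R (pow_dvd_pow ℓ (Nat.le_succ n))).comp (u (n + 1)) = u n)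
    (A : Type*) [CommRing A] [Algebra R A]
    {ι : Type*} (B : ι → Type*) [∀ i, CommRing (B i)] [∀ i, Algebra R (B i)]
    [∀ i, Algebra A (B i)] [∀ i, IsScalarTower R A (B i)]
    (hinj : Function.Injective (Pi.ringHom fun i => algebraMap A (B i))) :
    Set.BijOn
      (fun (g : C →ₐ[R] LaurentPolynomial A) (i : ι) =>
        (groupAlgMapCoeff ℤ (IsScalarTower.toAlgHom R A (B i))).comp g)
      (laurentHopfHomSet ℓ u A)
      (Set.univ.pi fun i => laurentHopfHomSet ℓ u (B i)) :=
  hopfHomSet_bijOn_of_injective_into_product_general hℓ hR u hu hucomp A B hinj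
end
end
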